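/- arXiv:2603.07180 — 8 statements merged into one kernel-verified Lean document; each statement's English description precedes it below -/
import Mathlib

section
/- Let A be a block matrix A = [[A1, A2ᵀ],[A2, A3]] with A3 invertible, and let S = A1 - A2ᵀ A3⁻¹ A2 be the Schur complement. If A is invertible then S is invertible and ‖S⁻¹‖ ≤ ‖A⁻¹‖ ≤ (1+‖A2‖)²(1+‖A3⁻¹‖)²(1+‖S⁻¹‖). -/
/-
With `C = A3⁻¹`, the Schur-complement formula for the inverse reads
`A⁻¹ = diag(0, C) + [1; -C A2] S⁻¹ [1, -A2ᵀ C]`, whose top-left block is `S⁻¹`.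
Compressing a matrix to a block does not increase its ℓ² operator norm, which gives
`‖S⁻¹‖ ≤ ‖A⁻¹‖`; the triangle inequality gives `‖A⁻¹‖ ≤ ‖C‖ + (1 + ‖C‖‖A2‖)² ‖S⁻¹‖`,
using `‖A2ᵀ‖ ≤ ‖A2‖`. Norms of block matrices are controlled through the C*-identity
`‖M‖² = ‖Mᴴ M‖` applied to `M = [M₁; M₂]`, for which `Mᴴ M = M₁ᴴ M₁ + M₂ᴴ M₂`.
-/

/-- The ℓ²-operator norm of a (rectangular) complex matrix, defined as the operator
norm of the associated linear map between Euclidean spaces. -/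
noncomputable def l2OpNorm {m n : Type*} [Fintype m] [Fintype n] [DecidableEq n]
    (M : Matrix m n ℂ) : ℝ :=
  ‖LinearMap.toContinuousLinearMap (Matrix.toEuclideanLin M)‖

open scoped Matrix.Norms.L2Operator
open Matrix WithLp

lemma EuclideanSpace.norm_toLp_star {𝕜 ι : Type*} [RCLike 𝕜] [Fintype ι] (v : ι → 𝕜) :
    ‖toLp 2 (star v)‖ = ‖toLp 2 v‖ := by
  simp [EuclideanSpace.norm_eq]

namespace Matrix

section L2OpNorm

variable {𝕜 : Type*} [RCLike 𝕜] {m m₁ m₂ n n₁ n₂ : Type*} [Fintype m] [Fintype m₁] [Fintype m₂]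
  [Fintype n] [Fintype n₁] [Fintype n₂] [DecidableEq n] [DecidableEq n₁] [DecidableEq n₂]

lemma l2_opNorm_one_le : ‖(1 : Matrix n n 𝕜)‖ ≤ 1 := by
  rw [← diagonal_one, l2_opNorm_diagonal]
  exact (pi_norm_le_iff_of_nonneg zero_le_one).mpr fun _ => by simp

lemma l2_opNorm_map_star_le (A : Matrix m n 𝕜) : ‖A.map star‖ ≤ ‖A‖ := by
  rw [l2_opNorm_def]
  refine ContinuousLinearMap.opNorm_le_bound _ (norm_nonneg _) fun x => ?_
  have hx : (A.map star) *ᵥ ofLp x = star (A *ᵥ star (ofLp x)) := by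
    ext i; simp [mulVec, dotProduct, star_sum, mul_comm]
  calc ‖toLp 2 ((A.map star) *ᵥ ofLp x)‖ = ‖toLp 2 (A *ᵥ star (ofLp x))‖ := by
        rw [hx, EuclideanSpace.norm_toLp_star]
    _ ≤ ‖A‖ * ‖toLp 2 (star (ofLp x))‖ := l2_opNorm_mulVec A _
    _ = ‖A‖ * ‖x‖ := by rw [EuclideanSpace.norm_toLp_star]

lemma l2_opNorm_transpose_le [DecidableEq m] (A : Matrix m n 𝕜) : ‖Aᵀ‖ ≤ ‖A‖ := by
  have hA : Aᵀ = Aᴴ.map star := by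
    ext i j
    simp only [transpose_apply, map_apply, conjTranspose_apply, star_star]
  rw [hA, ← l2_opNorm_conjTranspose A]
  exact l2_opNorm_map_star_le Aᴴ

lemma l2_opNorm_fromRows_sq_le (A₁ : Matrix m₁ n 𝕜) (A₂ : Matrix m₂ n 𝕜) :
    ‖fromRows A₁ A₂‖ ^ 2 ≤ ‖A₁‖ ^ 2 + ‖A₂‖ ^ 2 := by
  simp only [sq, ← l2_opNorm_conjTranspose_mul_self,
    conjTranspose_fromRows_eq_fromCols_conjTranspose, fromCols_mul_fromRows]
  exact norm_add_le _ _

lemma l2_opNorm_fromRows_le (A₁ : Matrix m₁ n 𝕜) (A₂ : Matrix m₂ n 𝕜) :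
    ‖fromRows A₁ A₂‖ ≤ ‖A₁‖ + ‖A₂‖ := by
  nlinarith [l2_opNorm_fromRows_sq_le A₁ A₂, norm_nonneg A₁, norm_nonneg A₂,
    norm_nonneg (fromRows A₁ A₂)]

lemma l2_opNorm_fromCols_le [DecidableEq m] (A₁ : Matrix m n₁ 𝕜) (A₂ : Matrix m n₂ 𝕜) :
    ‖fromCols A₁ A₂‖ ≤ ‖A₁‖ + ‖A₂‖ := by
  simpa [← l2_opNorm_conjTranspose (fromCols A₁ A₂),
    conjTranspose_fromCols_eq_fromRows_conjTranspose, l2_opNorm_conjTranspose]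
    using l2_opNorm_fromRows_le A₁ᴴ A₂ᴴ

lemma l2_opNorm_fromBlocks_le [DecidableEq m₁] [DecidableEq m₂] (A : Matrix m₁ n₁ 𝕜)
    (B : Matrix m₁ n₂ 𝕜) (C : Matrix m₂ n₁ 𝕜) (D : Matrix m₂ n₂ 𝕜) :
    ‖fromBlocks A B C D‖ ≤ ‖A‖ + ‖B‖ + ‖C‖ + ‖D‖ := by
  rw [← fromRows_fromCols_eq_fromBlocks]
  linarith [l2_opNorm_fromRows_le (fromCols A B) (fromCols C D), l2_opNorm_fromCols_le A B,
    l2_opNorm_fromCols_le C D]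

lemma l2_opNorm_le_l2_opNorm_fromRows (A₁ : Matrix m₁ n 𝕜) (A₂ : Matrix m₂ n 𝕜) :
    ‖A₁‖ ≤ ‖fromRows A₁ A₂‖ := by
  classical
  set E : Matrix m₁ (m₁ ⊕ m₂) 𝕜 := fromCols 1 0
  have hE : ‖E‖ ≤ 1 := by
    simpa using (l2_opNorm_fromCols_le (1 : Matrix m₁ m₁ 𝕜) (0 : Matrix m₁ m₂ 𝕜)).trans
      (by simpa using l2_opNorm_one_le)
  calc ‖A₁‖ = ‖E * fromRows A₁ A₂‖ := by simp [E, fromCols_mul_fromRows]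
    _ ≤ ‖E‖ * ‖fromRows A₁ A₂‖ := l2_opNorm_mul _ _
    _ ≤ ‖fromRows A₁ A₂‖ := mul_le_of_le_one_left (norm_nonneg _) hE

lemma l2_opNorm_le_l2_opNorm_fromCols [DecidableEq m] (A₁ : Matrix m n₁ 𝕜) (A₂ : Matrix m n₂ 𝕜) :
    ‖A₁‖ ≤ ‖fromCols A₁ A₂‖ := by
  simpa [← l2_opNorm_conjTranspose (fromCols A₁ A₂),
    conjTranspose_fromCols_eq_fromRows_conjTranspose, l2_opNorm_conjTranspose]
    using l2_opNorm_le_l2_opNorm_fromRows A₁ᴴ A₂ᴴ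

lemma l2_opNorm_le_l2_opNorm_fromBlocks [DecidableEq m₁] (A : Matrix m₁ n₁ 𝕜)
    (B : Matrix m₁ n₂ 𝕜) (C : Matrix m₂ n₁ 𝕜) (D : Matrix m₂ n₂ 𝕜) :
    ‖A‖ ≤ ‖fromBlocks A B C D‖ := by
  rw [← fromRows_fromCols_eq_fromBlocks]
  exact (l2_opNorm_le_l2_opNorm_fromCols A B).trans (l2_opNorm_le_l2_opNorm_fromRows _ _)

end L2OpNorm

lemma inv_fromBlocks₂₂_eq {α : Type*} [CommRing α] {m n : Type*} [Fintype m] [Fintype n]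
    [DecidableEq m] [DecidableEq n]
    (A : Matrix m m α) (B : Matrix m n α) (C : Matrix n m α) (D : Matrix n n α)
    (hD : IsUnit D.det) (hS : IsUnit (A - B * D⁻¹ * C).det) :
    (fromBlocks A B C D)⁻¹ =
      fromBlocks (A - B * D⁻¹ * C)⁻¹ (-((A - B * D⁻¹ * C)⁻¹ * B * D⁻¹))
        (-(D⁻¹ * C * (A - B * D⁻¹ * C)⁻¹))
        (D⁻¹ + D⁻¹ * C * (A - B * D⁻¹ * C)⁻¹ * B * D⁻¹) := by
  let := D.invertibleOfIsUnitDet hD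
  let := (A - B * ⅟D * C).invertibleOfIsUnitDet (by rwa [invOf_eq_nonsing_inv])
  let := fromBlocks₂₂Invertible A B C D
  rw [← invOf_eq_nonsing_inv, invOf_fromBlocks₂₂_eq]
  simp only [invOf_eq_nonsing_inv]

lemma fromBlocks_eq_add_fromRows_mul_fromCols {α : Type*} [Ring α] {m n : Type*} [Fintype m]
    [DecidableEq m]
    (P : Matrix m m α) (X : Matrix n m α) (Y : Matrix m n α) (D : Matrix n n α) :
    fromBlocks P (P * Y) (X * P) (D + X * P * Y) =
      fromBlocks 0 0 0 D + fromRows 1 X * P * fromCols 1 Y := by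
  rw [fromRows_mul, fromRows_mul_fromCols, fromBlocks_add]
  simp

lemma l2_opNorm_inv_fromBlocks₂₂_le {𝕜 : Type*} [RCLike 𝕜] {m n : Type*} [Fintype m]
    [Fintype n] [DecidableEq m] [DecidableEq n]
    (A : Matrix m m 𝕜) (B : Matrix m n 𝕜) (C : Matrix n m 𝕜) (D : Matrix n n 𝕜)
    (hD : IsUnit D.det) (hS : IsUnit (A - B * D⁻¹ * C).det) :
    ‖(fromBlocks A B C D)⁻¹‖ ≤
      ‖D⁻¹‖ + (1 + ‖D⁻¹‖ * ‖C‖) * ‖(A - B * D⁻¹ * C)⁻¹‖ * (1 + ‖B‖ * ‖D⁻¹‖) := by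
  have hinv : (fromBlocks A B C D)⁻¹ = fromBlocks 0 0 0 D⁻¹ +
      fromRows 1 (-(D⁻¹ * C)) * (A - B * D⁻¹ * C)⁻¹ * fromCols 1 (-(B * D⁻¹)) := by
    rw [inv_fromBlocks₂₂_eq A B C D hD hS, ← fromBlocks_eq_add_fromRows_mul_fromCols]
    simp only [Matrix.mul_neg, Matrix.neg_mul, Matrix.mul_assoc, neg_neg]
  have hX : ‖fromRows (1 : Matrix m m 𝕜) (-(D⁻¹ * C))‖ ≤ 1 + ‖D⁻¹‖ * ‖C‖ := by
    refine (l2_opNorm_fromRows_le _ _).trans (add_le_add l2_opNorm_one_le ?_)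
    rw [norm_neg]; exact l2_opNorm_mul _ _
  have hY : ‖fromCols (1 : Matrix m m 𝕜) (-(B * D⁻¹))‖ ≤ 1 + ‖B‖ * ‖D⁻¹‖ := by
    refine (l2_opNorm_fromCols_le _ _).trans (add_le_add l2_opNorm_one_le ?_)
    rw [norm_neg]; exact l2_opNorm_mul _ _
  have hcorner : ‖(fromBlocks 0 0 0 D⁻¹ : Matrix (m ⊕ n) (m ⊕ n) 𝕜)‖ ≤ ‖D⁻¹‖ := by
    simpa using
      l2_opNorm_fromBlocks_le (0 : Matrix m m 𝕜) (0 : Matrix m n 𝕜) (0 : Matrix n m 𝕜) D⁻¹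
  rw [hinv]
  refine (norm_add_le _ _).trans (add_le_add hcorner ?_)
  refine (l2_opNorm_mul _ _).trans ?_
  gcongr
  exact (l2_opNorm_mul _ _).trans (mul_le_mul_of_nonneg_right hX (norm_nonneg _))

end Matrix

lemma l2OpNorm_eq_l2_opNorm {m n : Type*} [Fintype m] [Fintype n] [DecidableEq n]
    (M : Matrix m n ℂ) : l2OpNorm M = ‖M‖ := rfl

/-- For a block matrix `A = [[A1, A2ᵀ], [A2, A3]]` with `A3` invertible and
`S = A1 - A2ᵀ A3⁻¹ A2` the Schur complement: if `A` is invertible then `S` is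
invertible and `‖S⁻¹‖ ≤ ‖A⁻¹‖ ≤ (1+‖A2‖)²(1+‖A3⁻¹‖)²(1+‖S⁻¹‖)`. -/
theorem schur_inverse_norm_bound (k n : ℕ)
    (A1 : Matrix (Fin k) (Fin k) ℂ) (A2 : Matrix (Fin n) (Fin k) ℂ)
    (A3 : Matrix (Fin n) (Fin n) ℂ) (h3 : IsUnit A3.det)
    (hA : IsUnit (Matrix.fromBlocks A1 A2.transpose A2 A3).det) :
    IsUnit (A1 - A2.transpose * A3⁻¹ * A2).det ∧
    l2OpNorm ((A1 - A2.transpose * A3⁻¹ * A2)⁻¹)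
      ≤ l2OpNorm ((Matrix.fromBlocks A1 A2.transpose A2 A3)⁻¹) ∧
    l2OpNorm ((Matrix.fromBlocks A1 A2.transpose A2 A3)⁻¹)
      ≤ (1 + l2OpNorm A2) ^ 2 * (1 + l2OpNorm A3⁻¹) ^ 2 *
        (1 + l2OpNorm ((A1 - A2.transpose * A3⁻¹ * A2)⁻¹)) := by
  simp only [l2OpNorm_eq_l2_opNorm]
  have hS : IsUnit (A1 - A2ᵀ * A3⁻¹ * A2).det := by
    let := A3.invertibleOfIsUnitDet h3
    rw [det_fromBlocks₂₂, invOf_eq_nonsing_inv] at hA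
    exact (IsUnit.mul_iff.mp hA).2
  refine ⟨hS, ?_, ?_⟩
  · rw [inv_fromBlocks₂₂_eq _ _ _ _ h3 hS]
    exact l2_opNorm_le_l2_opNorm_fromBlocks _ _ _ _
  set a := ‖A2‖
  set c := ‖A3⁻¹‖
  set s := ‖(A1 - A2ᵀ * A3⁻¹ * A2)⁻¹‖
  have ha : 0 ≤ a := norm_nonneg _
  have hc : 0 ≤ c := norm_nonneg _
  have hs : 0 ≤ s := norm_nonneg _
  calc ‖(fromBlocks A1 A2ᵀ A2 A3)⁻¹‖ ≤ c + (1 + c * a) * s * (1 + ‖A2ᵀ‖ * c) :=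
        l2_opNorm_inv_fromBlocks₂₂_le _ _ _ _ h3 hS
    _ ≤ c + (1 + c * a) * s * (1 + a * c) := by gcongr; exact l2_opNorm_transpose_le A2
    _ ≤ (1 + a) ^ 2 * (1 + c) ^ 2 * (1 + s) := by
        have hc_le : c ≤ ((1 + a) * (1 + c)) ^ 2 := by nlinarith [mul_nonneg ha hc]
        have hac_le : (1 + a * c) ^ 2 ≤ ((1 + a) * (1 + c)) ^ 2 := by gcongr; nlinarith
        nlinarith
end

section
/- Let f(z) = zⁿ + a₁z^{n−1} + ⋯ + a_n = ∏(z − α_i) and g(z) = zⁿ + b₁z^{n−1} + ⋯ + b_n = ∏(z − β_i) be monic complex polynomials of degree n. Set Γ = max_{1≤k≤n} max(|a_k|^{1/k}, |b_k|^{1/k}) and γ = 2Γ. Then the roots can be enumerated so that max_i |α_i − β_i| ≤ 4·2^{−1/n} (∑_{k=1}^n |a_k − b_k| γ^{n−k})^{1/n}. -/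
/-!
Join `f` to `g` by the segment `h_t = f + t (g - f)`, `0 ≤ t ≤ 1`. Every coefficient of `h_t` obeys
the same bound `|c_k| ≤ Γ^k` as those of `f` and `g`, so all roots of all `h_t` lie in the disc
`|z| ≤ γ = 2Γ`, on which `|f - g| ≤ E := ∑ |a_k - b_k| γ^{n-k}`. At a root of `h_t` we have
`f = t (f - g)` and `g = (t - 1) (f - g)`, hence `|f g| ≤ (E/2)²`: all these roots lie in the
compact lemniscate `K = {|f g| ≤ (E/2)²}`. Since roots move continuously with `t`, each connected
component of `K` contains as many `α`s as `β`s, so the `α_i` can be paired with the `β_σi` within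
components. Finally, a connected set on which the monic polynomial `f g` of degree `2n` is bounded
by `B` has diameter at most `4 B^{1/(2n)}`: project it onto a line and compare with the lower bound
`max_{[0, L]} ∏ |x - t_m| ≥ (L/4)^N`, which the maximum modulus principle gives on the unit circle.
-/

open Polynomial Finset Metric Complex ComplexConjugate Filter Topology

theorem Polynomial.exists_norm_eq_one_norm_eval_zero_le (P : ℂ[X]) :
    ∃ w : ℂ, ‖w‖ = 1 ∧ ‖P.eval 0‖ ≤ ‖P.eval w‖ := by
  obtain ⟨w, hw, hmax⟩ := Complex.exists_mem_frontier_isMaxOn_norm (f := fun z => P.eval z)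
    isBounded_ball (nonempty_ball.2 one_pos) P.differentiable.diffContOnCl
  rw [frontier_ball 0 one_ne_zero, mem_sphere_zero_iff_norm] at hw
  exact ⟨w, hw, hmax (subset_closure (mem_ball_self one_pos))⟩

theorem exists_norm_eq_one_one_le_prod_norm {ι : Type*} [Fintype ι] (c : ι → ℂ) :
    ∃ w : ℂ, ‖w‖ = 1 ∧ 1 ≤ ∏ m, ‖w ^ 2 + c m * w + 1‖ := by
  obtain ⟨w, hw, hle⟩ := (∏ m, (X ^ 2 + C (c m) * X + 1)).exists_norm_eq_one_norm_eval_zero_le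
  exact ⟨w, hw, by simpa [eval_prod] using hle⟩

-- On the unit circle `w⁻¹ = conj w`, so `|w² + c w + 1| = |2 Re w + c|`: the lemma above
-- becomes a lower bound for a real product along the diameter `[-1, 1]`.
theorem exists_mem_Icc_pow_le_prod_abs_sub {ι : Type*} [Fintype ι] (t : ι → ℝ) {L : ℝ}
    (hL : 0 ≤ L) : ∃ x ∈ Set.Icc 0 L, (L / 4) ^ Fintype.card ι ≤ ∏ m, |x - t m| := by
  rcases hL.eq_or_lt with rfl | hL
  · refine ⟨0, Set.left_mem_Icc.2 le_rfl, ?_⟩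
    rcases isEmpty_or_nonempty ι with hι | hι
    · simp
    · simp [zero_pow Fintype.card_ne_zero, prod_nonneg]
  obtain ⟨w, hw, hle⟩ := exists_norm_eq_one_one_le_prod_norm fun m => ((2 - 4 * t m / L : ℝ) : ℂ)
  have hre : |w.re| ≤ 1 := hw ▸ abs_re_le_norm w
  refine ⟨L / 2 * (w.re + 1), ⟨by nlinarith [abs_le.1 hre], by nlinarith [abs_le.1 hre]⟩, ?_⟩
  have hconj : w * conj w = 1 := by
    rw [mul_conj, normSq_eq_norm_sq, hw]; norm_num
  have hre_eq : ((w.re : ℝ) : ℂ) = (w + conj w) / 2 := by rw [add_conj]; push_cast; ring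
  have hfactor : ∀ m, |L / 2 * (w.re + 1) - t m| =
      L / 4 * ‖w ^ 2 + ((2 - 4 * t m / L : ℝ) : ℂ) * w + 1‖ := by
    intro m
    have : w ^ 2 + ((2 - 4 * t m / L : ℝ) : ℂ) * w + 1
        = w * ((2 * w.re + (2 - 4 * t m / L) : ℝ) : ℂ) := by
      push_cast
      rw [hre_eq]
      linear_combination (-1 : ℂ) * hconj
    rw [this, norm_mul, hw, one_mul, norm_real, Real.norm_eq_abs,
      ← abs_of_pos (by positivity : 0 < L / 4), ← abs_mul]
    congr 1
    field_simp
    ring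
  calc (L / 4) ^ Fintype.card ι ≤ (L / 4) ^ Fintype.card ι * ∏ m, ‖w ^ 2 + _ * w + 1‖ :=
        le_mul_of_one_le_right (by positivity) hle
    _ = ∏ m, |L / 2 * (w.re + 1) - t m| := by
        simp_rw [hfactor, prod_mul_distrib, prod_const, card_univ]

-- Project onto the line through `z₀, z₁`: the image of `S` covers `[0, ‖z₀ - z₁‖]` and the
-- projection does not increase distances to the `c m`.
theorem IsPreconnected.norm_sub_div_four_pow_le {ι : Type*} [Fintype ι] (c : ι → ℂ) {S : Set ℂ}
    (hS : IsPreconnected S) {z₀ z₁ : ℂ} (h₀ : z₀ ∈ S) (h₁ : z₁ ∈ S) {B : ℝ}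
    (hB : ∀ z ∈ S, ∏ m, ‖z - c m‖ ≤ B) : (‖z₀ - z₁‖ / 4) ^ Fintype.card ι ≤ B := by
  set D := ‖z₁ - z₀‖
  set ω : ℂ := conj (z₁ - z₀) / D
  set π : ℂ → ℝ := fun z => ((z - z₀) * ω).re
  have hω : ‖ω‖ ≤ 1 := by
    rw [norm_div, norm_conj, norm_real, Real.norm_of_nonneg (norm_nonneg _ : 0 ≤ D)]
    exact div_self_le_one D
  have hπ₀ : π z₀ = 0 := by simp [π]
  have hπ₁ : π z₁ = D := by
    simp only [π, ω, mul_div_assoc', mul_conj, normSq_eq_norm_sq]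
    norm_cast
    rw [sq, mul_self_div_self]
  have hπ_le : ∀ a b, |π a - π b| ≤ ‖a - b‖ := fun a b =>
    calc |π a - π b| = |((a - b) * ω).re| := by simp only [π, ← sub_re]; ring_nf
      _ ≤ ‖a - b‖ * ‖ω‖ := (abs_re_le_norm _).trans (norm_mul _ _).le
      _ ≤ ‖a - b‖ := mul_le_of_le_one_right (norm_nonneg _) hω
  obtain ⟨x, hx, hprod⟩ :=
    exists_mem_Icc_pow_le_prod_abs_sub (fun m => π (c m)) (norm_nonneg (z₁ - z₀))
  obtain ⟨z, hz, rfl⟩ := hS.intermediate_value h₀ h₁ (by fun_prop : Continuous π).continuousOn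
    (by rwa [hπ₀, hπ₁])
  calc (‖z₀ - z₁‖ / 4) ^ Fintype.card ι = (D / 4) ^ Fintype.card ι := by rw [norm_sub_rev]
    _ ≤ ∏ m, |π z - π (c m)| := hprod
    _ ≤ ∏ m, ‖z - c m‖ := prod_le_prod (fun _ _ => abs_nonneg _) fun m _ => hπ_le _ _
    _ ≤ B := hB z hz

theorem Multiset.exists_fin_map_eq {α : Type*} {n : ℕ} {M : Multiset α}
    (hM : Multiset.card M = n) : ∃ e : Fin n → α, univ.val.map e = M := by
  subst hM
  refine ⟨fun i => M.toList.get (i.cast M.length_toList.symm), ?_⟩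
  rw [Fin.univ_val_map]
  conv_rhs => rw [← M.coe_toList]
  congr 1
  exact List.ext_get (by simp) fun _ _ _ => by simp

theorem Multiset.mem_of_map_univ_eq {ι α : Type*} [Fintype ι] {e : ι → α} {M : Multiset α}
    (he : univ.val.map e = M) (i : ι) : e i ∈ M :=
  he ▸ Multiset.mem_map_of_mem e (mem_univ_val i)

theorem Polynomial.prod_X_sub_C_eq_map_prod {R ι : Type*} [CommRing R] [Fintype ι] (v : ι → R) :
    ∏ i, (X - C (v i)) = ((univ.val.map v).map fun a => X - C a).prod := by
  rw [Multiset.map_map]; rfl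

theorem Polynomial.roots_prod_X_sub_C_fintype {R ι : Type*} [CommRing R] [IsDomain R]
    [Fintype ι] (v : ι → R) : (∏ i, (X - C (v i))).roots = univ.val.map v := by
  rw [prod_X_sub_C_eq_map_prod, roots_multiset_prod_X_sub_C]

theorem Polynomial.isMonicOfDegree_prod_X_sub_C {R ι : Type*} [CommRing R] [Nontrivial R]
    [Fintype ι] (v : ι → R) : IsMonicOfDegree (∏ i, (X - C (v i))) (Fintype.card ι) :=
  ⟨by simp, monic_prod_X_sub_C _ _⟩

theorem Polynomial.Monic.prod_X_sub_C_eq_of_map_eq_roots {ι : Type*} [Fintype ι] {p : ℂ[X]}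
    (hp : p.Monic) {e : ι → ℂ} (he : univ.val.map e = p.roots) : ∏ i, (X - C (e i)) = p := by
  rw [prod_X_sub_C_eq_map_prod, he]
  exact prod_multiset_X_sub_C_of_monic_of_roots_card_eq hp IsAlgClosed.card_roots_eq_natDegree

theorem IsPreconnected.div_four_pow_natDegree_le {P : ℂ[X]} (hP : P.Monic) {S : Set ℂ}
    (hS : IsPreconnected S) {z₀ z₁ : ℂ} (h₀ : z₀ ∈ S) (h₁ : z₁ ∈ S) {B : ℝ}
    (hB : ∀ z ∈ S, ‖P.eval z‖ ≤ B) : (‖z₀ - z₁‖ / 4) ^ P.natDegree ≤ B := by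
  obtain ⟨e, he⟩ := Multiset.exists_fin_map_eq (IsAlgClosed.card_roots_eq_natDegree (p := P))
  have hPe := hP.prod_X_sub_C_eq_of_map_eq_roots he
  have hB' : ∀ z ∈ S, ∏ i, ‖z - e i‖ ≤ B := fun z hz => by
    have := hB z hz
    rw [← hPe, eval_prod, norm_prod] at this
    simpa using this
  simpa using hS.norm_sub_div_four_pow_le e h₀ h₁ hB'

theorem Polynomial.isCompact_setOf_norm_eval_le {R : Type*} [NormedRing R]
    [IsAbsoluteValue (norm : R → ℝ)] [ProperSpace R] (P : R[X]) (hP : 0 < P.degree) (c : ℝ) :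
    IsCompact {z | ‖P.eval z‖ ≤ c} := by
  simpa [Set.preimage, mem_closedBall_zero_iff] using
    (P.isProperMap_eval hP).isCompact_preimage (isCompact_closedBall (0 : R) c)

theorem Polynomial.continuous_coeff_prod {T ι R : Type*} [TopologicalSpace T] [CommSemiring R]
    [TopologicalSpace R] [IsTopologicalSemiring R] (s : Finset ι) {q : ι → T → R[X]}
    (hq : ∀ i m, Continuous fun t => (q i t).coeff m) (m : ℕ) :
    Continuous fun t => (∏ i ∈ s, q i t).coeff m := by
  classical
  induction s using Finset.induction generalizing m with
  | empty => simpa using continuous_const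
  | insert a s ha ih =>
    simp only [prod_insert ha, coeff_mul]
    exact continuous_finsetSum _ fun x _ => (hq a x.1).mul (ih x.2)

theorem Polynomial.continuous_coeff_prod_X_sub_C {ι : Type*} [Fintype ι] (m : ℕ) :
    Continuous fun v : ι → ℂ => (∏ i, (X - C (v i))).coeff m :=
  continuous_coeff_prod _ (fun i k => by
    simp only [coeff_sub, coeff_C]
    exact continuous_const.sub (by split <;> fun_prop)) m

theorem Polynomial.map_univ_eq_roots_of_tendsto {T ι : Type*} [TopologicalSpace T] [Fintype ι]
    {p : T → ℂ[X]} (hp : ∀ t, (p t).Monic) (hcont : ∀ m, Continuous fun t => (p t).coeff m)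
    {ts : ℕ → T} {t₀ : T} (hts : Tendsto ts atTop (𝓝 t₀)) {e : ℕ → ι → ℂ}
    (he : ∀ k, univ.val.map (e k) = (p (ts k)).roots) {r : ι → ℂ}
    (hr : Tendsto e atTop (𝓝 r)) : univ.val.map r = (p t₀).roots := by
  have hprod : ∏ i, (X - C (r i)) = p t₀ := ext fun m => by
    refine tendsto_nhds_unique (((continuous_coeff_prod_X_sub_C m).tendsto r).comp hr) ?_
    simp only [Function.comp_def, (hp _).prod_X_sub_C_eq_of_map_eq_roots (he _)]
    exact ((hcont m).tendsto t₀).comp hts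
  rw [← hprod, roots_prod_X_sub_C_fintype]

theorem Filter.Tendsto.eventually_mem_iff {α X : Type*} [TopologicalSpace X] {U W : Set X}
    (hU : IsOpen U) (hW : IsOpen W) (hUW : Disjoint U W) {l : Filter α} {x : α → X} {y : X}
    (hx : Tendsto x l (𝓝 y)) (hy : y ∈ U ∪ W) : ∀ᶠ a in l, x a ∈ U ↔ y ∈ U := by
  rcases hy with hyU | hyW
  · exact (hx.eventually_mem (hU.mem_nhds hyU)).mono fun a ha => iff_of_true ha hyU
  · exact (hx.eventually_mem (hW.mem_nhds hyW)).mono fun a ha =>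
      iff_of_false (hUW.notMem_of_mem_right ha) (hUW.notMem_of_mem_right hyW)

theorem Filter.Tendsto.eventually_countP_map_eq {α ι X : Type*} [TopologicalSpace X] [Fintype ι]
    {U W : Set X} (hU : IsOpen U) (hW : IsOpen W) (hUW : Disjoint U W) [DecidablePred (· ∈ U)]
    {l : Filter α} {e : α → ι → X} {r : ι → X} (hr : Tendsto e l (𝓝 r))
    (hrUW : ∀ i, r i ∈ U ∪ W) :
    ∀ᶠ a in l, (univ.val.map (e a)).countP (· ∈ U) = (univ.val.map r).countP (· ∈ U) := by
  have hmem : ∀ᶠ a in l, ∀ i, e a i ∈ U ↔ r i ∈ U := eventually_all.2 fun i =>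
    ((continuous_apply i).continuousAt.tendsto.comp hr).eventually_mem_iff hU hW hUW (hrUW i)
  filter_upwards [hmem] with a ha
  rw [Multiset.countP_map, Multiset.countP_map]
  exact congrArg _ (Multiset.filter_congr fun i _ => ha i)

-- Continuity of the roots: along a sequence of parameters the enumerated roots, which stay in
-- `K`, have a convergent subsequence, and its limit enumerates the roots at the limit parameter.
theorem Polynomial.countP_roots_eq_of_continuous {T : Type*} [TopologicalSpace T]
    [FirstCountableTopology T] [PreconnectedSpace T] {n : ℕ} {p : T → ℂ[X]}
    (hp : ∀ t, IsMonicOfDegree (p t) n) (hcont : ∀ m, Continuous fun t => (p t).coeff m)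
    {K : Set ℂ} (hK : IsCompact K) (hroots : ∀ t, ∀ z ∈ (p t).roots, z ∈ K) {U W : Set ℂ}
    (hU : IsOpen U) (hW : IsOpen W) (hUW : Disjoint U W) (hKUW : K ⊆ U ∪ W)
    [DecidablePred (· ∈ U)] (t₀ t₁ : T) :
    (p t₀).roots.countP (· ∈ U) = (p t₁).roots.countP (· ∈ U) := by
  refine IsLocallyConstant.apply_eq_of_preconnectedSpace
    (f := fun t => (p t).roots.countP (· ∈ U)) ?_ _ _
  refine (IsLocallyConstant.iff_eventually_eq _).2 fun t₀ => ?_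
  by_contra hfreq
  obtain ⟨ts, hts, hbad⟩ := frequently_iff_seq_forall.1 (not_eventually.1 hfreq)
  choose e he using fun k => Multiset.exists_fin_map_eq
    (IsAlgClosed.card_roots_eq_natDegree.trans (hp (ts k)).natDegree_eq)
  obtain ⟨r, hrK, φ, hφ, hr⟩ := (isCompact_univ_pi fun _ : Fin n => hK).tendsto_subseq
    (x := e) fun k i _ => hroots _ _ (Multiset.mem_of_map_univ_eq (he k) i)
  have hr_roots := map_univ_eq_roots_of_tendsto (fun t => (hp t).monic) hcont
    (hts.comp hφ.tendsto_atTop) (fun k => he (φ k)) hr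
  obtain ⟨k, hk⟩ := (hr.eventually_countP_map_eq hU hW hUW
    fun i => hKUW (hrK i (Set.mem_univ i))).exists
  exact hbad (φ k) (by rw [← he, ← hr_roots]; exact hk)

theorem exists_isClopen_mem_inter_subset_connectedComponent {Y : Type*} [TopologicalSpace Y]
    [T2Space Y] [CompactSpace Y] (y : Y) {s : Set Y} (hs : s.Finite) :
    ∃ A, IsClopen A ∧ y ∈ A ∧ s ∩ A ⊆ connectedComponent y := by
  have hsep : ∀ x, ∃ Z : Set Y, IsClopen Z ∧ y ∈ Z ∧ (x ∈ Z → x ∈ connectedComponent y) := by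
    intro x
    by_cases hx : x ∈ connectedComponent y
    · exact ⟨Set.univ, isClopen_univ, Set.mem_univ y, fun _ => hx⟩
    · rw [connectedComponent_eq_iInter_isClopen, Set.mem_iInter] at hx
      obtain ⟨⟨Z, hZ, hyZ⟩, hxZ⟩ := not_forall.1 hx
      exact ⟨Z, hZ, hyZ, fun h => absurd h hxZ⟩
  choose Z hZ hyZ hxZ using hsep
  exact ⟨⋂ x ∈ s, Z x, hs.isClopen_biInter fun x _ => hZ x, Set.mem_iInter₂.2 fun x _ => hyZ x,
    fun x ⟨hx, hxA⟩ => hxZ x (Set.mem_iInter₂.1 hxA x hx)⟩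

theorem IsCompact.exists_separating_connectedComponentIn {X : Type*} [TopologicalSpace X]
    [T2Space X] {K : Set X} (hK : IsCompact K) {z₀ : X} (hz₀ : z₀ ∈ K) {s : Set X}
    (hs : s.Finite) (hsK : s ⊆ K) :
    ∃ U W : Set X, IsOpen U ∧ IsOpen W ∧ Disjoint U W ∧ K ⊆ U ∪ W ∧
      ∀ x ∈ s, x ∈ U ↔ x ∈ connectedComponentIn K z₀ := by
  have := isCompact_iff_compactSpace.1 hK
  obtain ⟨A, hA, hz₀A, hsA⟩ := exists_isClopen_mem_inter_subset_connectedComponent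
    (⟨z₀, hz₀⟩ : K) (hs.preimage Subtype.val_injective.injOn)
  obtain ⟨U, W, hU, hW, hAU, hAW, hUW⟩ := SeparatedNhds.of_isCompact_isCompact
    (hA.isClosed.isCompact.image continuous_subtype_val)
    (hA.compl.isClosed.isCompact.image continuous_subtype_val)
    (Set.disjoint_image_of_injective Subtype.val_injective disjoint_compl_right)
  refine ⟨U, W, hU, hW, hUW, fun x hx => ?_, fun x hx => ⟨fun hxU => ?_, fun hxc => ?_⟩⟩
  · by_cases h : (⟨x, hx⟩ : K) ∈ A
    · exact Or.inl (hAU ⟨_, h, rfl⟩)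
    · exact Or.inr (hAW ⟨_, h, rfl⟩)
  · rw [connectedComponentIn_eq_image hz₀]
    by_cases h : (⟨x, hsK hx⟩ : K) ∈ A
    · exact ⟨_, hsA ⟨hx, h⟩, rfl⟩
    · exact absurd (hAW ⟨_, h, rfl⟩) (hUW.notMem_of_mem_left hxU)
  · rw [connectedComponentIn_eq_image hz₀] at hxc
    obtain ⟨y, hy, rfl⟩ := hxc
    exact hAU ⟨y, hA.connectedComponent_subset hz₀A hy, rfl⟩

theorem Equiv.Perm.exists_apply_eq_of_card_fiber_eq {ι κ : Type*} [Finite ι] {u v : ι → κ}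
    (h : ∀ c, Nat.card {i // u i = c} = Nat.card {i // v i = c}) :
    ∃ σ : Equiv.Perm ι, ∀ i, v (σ i) = u i :=
  ⟨Equiv.ofFiberEquiv fun c => (Finite.card_eq.1 (h c)).some, Equiv.ofFiberEquiv_map _⟩

section RootMatching

variable {T ι : Type*} [TopologicalSpace T] [FirstCountableTopology T] [PreconnectedSpace T]
  [Fintype ι] {n : ℕ} {p : T → ℂ[X]} {K : Set ℂ} {t₀ t₁ : T} {α β : ι → ℂ}

theorem Polynomial.card_mem_connectedComponentIn_eq_of_continuous
    (hp : ∀ t, IsMonicOfDegree (p t) n) (hcont : ∀ m, Continuous fun t => (p t).coeff m)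
    (hK : IsCompact K) (hroots : ∀ t, ∀ z ∈ (p t).roots, z ∈ K)
    (hα : univ.val.map α = (p t₀).roots) (hβ : univ.val.map β = (p t₁).roots)
    {z₀ : ℂ} (hz₀ : z₀ ∈ K) :
    Nat.card {i // α i ∈ connectedComponentIn K z₀} =
      Nat.card {i // β i ∈ connectedComponentIn K z₀} := by
  classical
  obtain ⟨U, W, hU, hW, hUW, hKUW, hsU⟩ := hK.exists_separating_connectedComponentIn hz₀
    ((Set.finite_range α).union (Set.finite_range β)) <| Set.union_subset
      (Set.range_subset_iff.2 fun i => hroots _ _ (Multiset.mem_of_map_univ_eq hα i))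
      (Set.range_subset_iff.2 fun i => hroots _ _ (Multiset.mem_of_map_univ_eq hβ i))
  have hcard : ∀ γ : ι → ℂ, Set.range γ ⊆ Set.range α ∪ Set.range β →
      Nat.card {i // γ i ∈ connectedComponentIn K z₀} = (univ.val.map γ).countP (· ∈ U) := by
    intro γ hγ
    rw [Nat.card_eq_fintype_card, Fintype.card_subtype, Multiset.countP_map, card_def,
      filter_val, Multiset.filter_congr fun i _ => hsU _ (hγ (Set.mem_range_self i))]
  rw [hcard α Set.subset_union_left, hcard β Set.subset_union_right, hα, hβ]
  exact countP_roots_eq_of_continuous hp hcont hK hroots hU hW hUW hKUW t₀ t₁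

theorem Polynomial.exists_perm_mem_connectedComponentIn_of_continuous
    (hp : ∀ t, IsMonicOfDegree (p t) n) (hcont : ∀ m, Continuous fun t => (p t).coeff m)
    (hK : IsCompact K) (hroots : ∀ t, ∀ z ∈ (p t).roots, z ∈ K)
    (hα : univ.val.map α = (p t₀).roots) (hβ : univ.val.map β = (p t₁).roots) :
    ∃ σ : Equiv.Perm ι, ∀ i, β (σ i) ∈ connectedComponentIn K (α i) := by
  have hαK i : α i ∈ K := hroots _ _ (Multiset.mem_of_map_univ_eq hα i)
  have hβK i : β i ∈ K := hroots _ _ (Multiset.mem_of_map_univ_eq hβ i)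
  have hfiber : ∀ {γ : ι → ℂ}, (∀ i, γ i ∈ K) → ∀ z₀ ∈ K,
      Nat.card {i // connectedComponentIn K (γ i) = connectedComponentIn K z₀} =
        Nat.card {i // γ i ∈ connectedComponentIn K z₀} := fun hγ _ _ =>
    Nat.card_congr <| Equiv.subtypeEquivRight fun i =>
      ⟨fun h => h ▸ mem_connectedComponentIn (hγ i), fun h => (connectedComponentIn_eq h).symm⟩
  obtain ⟨σ, hσ⟩ := Equiv.Perm.exists_apply_eq_of_card_fiber_eq
    (u := fun i => connectedComponentIn K (α i)) (v := fun i => connectedComponentIn K (β i))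
    fun S => by
      by_cases hS : ∃ z₀ ∈ K, connectedComponentIn K z₀ = S
      · obtain ⟨z₀, hz₀, rfl⟩ := hS
        rw [hfiber hαK z₀ hz₀, hfiber hβK z₀ hz₀]
        exact card_mem_connectedComponentIn_eq_of_continuous hp hcont hK hroots hα hβ hz₀
      · have hempty : ∀ {γ : ι → ℂ}, (∀ i, γ i ∈ K) →
            Nat.card {i // connectedComponentIn K (γ i) = S} = 0 := fun hγ =>
          Nat.card_eq_zero.2 (Or.inl ⟨fun i => hS ⟨_, hγ i, i.2⟩⟩)
        rw [hempty hαK, hempty hβK]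
  exact ⟨σ, fun i => hσ i ▸ mem_connectedComponentIn (hβK (σ i))⟩

end RootMatching

theorem Finset.sum_Icc_one_sub_eq_sum_range {M : Type*} [AddCommMonoid M] (n : ℕ) (f : ℕ → M) :
    ∑ k ∈ Icc 1 n, f (n - k) = ∑ m ∈ range n, f m :=
  sum_nbij' (n - ·) (n - ·) (fun k hk => by simp at hk ⊢; omega)
    (fun m hm => by simp at hm ⊢; omega) (fun k hk => by simp at hk; omega)
    (fun m hm => by simp at hm; omega) fun _ _ => rfl

-- Horner: the sum `S n` satisfies `S (n + 1) = a * (S n + b ^ n)`.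
theorem sum_range_pow_sub_mul_pow_lt {a b : ℝ} (ha : 0 ≤ a) (hab : 2 * a < b) (n : ℕ) :
    ∑ m ∈ range n, a ^ (n - m) * b ^ m < b ^ n := by
  induction n with
  | zero => simp
  | succ n ih =>
    have hb : 0 < b ^ n := pow_pos (by linarith) n
    have hsucc : ∑ m ∈ range (n + 1), a ^ (n + 1 - m) * b ^ m
        = a * (∑ m ∈ range n, a ^ (n - m) * b ^ m + b ^ n) := by
      rw [sum_range_succ, mul_add, mul_sum, Nat.add_sub_cancel_left, pow_one]
      congr 1
      exact sum_congr rfl fun m hm => by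
        rw [Nat.sub_add_comm (mem_range.1 hm).le, pow_succ]; ring
    rw [hsucc, pow_succ]
    nlinarith [mul_le_mul_of_nonneg_left ih.le ha]

theorem Polynomial.Monic.norm_le_two_mul_of_isRoot {𝕜 : Type*} [NormedField 𝕜] {p : 𝕜[X]}
    (hp : p.Monic) {Γ : ℝ} (hΓ : 0 ≤ Γ)
    (hcoeff : ∀ m < p.natDegree, ‖p.coeff m‖ ≤ Γ ^ (p.natDegree - m)) {z : 𝕜}
    (hz : p.IsRoot z) : ‖z‖ ≤ 2 * Γ := by
  set n := p.natDegree
  by_contra! hlt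
  have hzn : z ^ n = -∑ m ∈ range n, p.coeff m * z ^ m := by
    have := hz.eq_zero
    rw [eval_eq_sum_range, sum_range_succ, hp.coeff_natDegree, one_mul] at this
    exact eq_neg_of_add_eq_zero_right this
  refine (sum_range_pow_sub_mul_pow_lt hΓ hlt n).not_ge ?_
  calc ‖z‖ ^ n = ‖∑ m ∈ range n, p.coeff m * z ^ m‖ := by rw [← norm_pow, hzn, norm_neg]
    _ ≤ ∑ m ∈ range n, ‖p.coeff m‖ * ‖z‖ ^ m := norm_sum_le_of_le _ fun m _ => by
        rw [norm_mul, norm_pow]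
    _ ≤ ∑ m ∈ range n, Γ ^ (n - m) * ‖z‖ ^ m := sum_le_sum fun m hm =>
        mul_le_mul_of_nonneg_right (hcoeff m (mem_range.1 hm)) (by positivity)

theorem Polynomial.norm_eval_le_sum_range {𝕜 : Type*} [NormedField 𝕜] {p : 𝕜[X]} {N : ℕ}
    (hN : p.natDegree < N) {z : 𝕜} {R : ℝ} (hz : ‖z‖ ≤ R) :
    ‖p.eval z‖ ≤ ∑ m ∈ range N, ‖p.coeff m‖ * R ^ m := by
  rw [eval_eq_sum_range' hN]
  refine norm_sum_le_of_le _ fun m _ => ?_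
  rw [norm_mul, norm_pow]
  gcongr

theorem Polynomial.norm_coeff_le_pow_of_rpow_le {R : Type*} [NormedRing R] {p : R[X]} {n : ℕ}
    {Γ : ℝ} (hΓ : 0 ≤ Γ) (h : ∀ k ∈ Icc 1 n, ‖p.coeff (n - k)‖ ^ ((1 : ℝ) / k) ≤ Γ) (m : ℕ)
    (hm : m < n) : ‖p.coeff m‖ ≤ Γ ^ (n - m) := by
  have := h (n - m) (mem_Icc.2 ⟨by omega, Nat.sub_le n m⟩)
  rwa [Nat.sub_sub_self hm.le, one_div, Real.rpow_inv_le_iff_of_pos (norm_nonneg _) hΓ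
    (Nat.cast_pos.2 (by omega)), Real.rpow_natCast] at this

theorem Polynomial.IsMonicOfDegree.add_C_mul_sub {R : Type*} [CommRing R] {f g : R[X]} {n : ℕ}
    (hn : n ≠ 0) (hf : IsMonicOfDegree f n) (hg : IsMonicOfDegree g n) (t : R) :
    IsMonicOfDegree (f + C t * (g - f)) n :=
  hf.add_right ((natDegree_C_mul_le _ _).trans_lt (hg.natDegree_sub_lt hn hf))

-- `a = t (a - b)` and `b = (t - 1) (a - b)`, and `t (1 - t) ≤ 1 / 4`.
theorem Complex.norm_mul_norm_le_of_add_mul_sub_eq_zero {a b : ℂ} {t : ℝ} (ht : t ∈ Set.Icc 0 1)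
    (h : a + t * (b - a) = 0) : ‖a‖ * ‖b‖ ≤ (‖a - b‖ / 2) ^ 2 := by
  have ha : ‖a‖ = t * ‖a - b‖ := calc
    ‖a‖ = ‖(t : ℂ) * (a - b)‖ := by congr 1; linear_combination h
    _ = t * ‖a - b‖ := by rw [norm_mul, norm_real, Real.norm_of_nonneg ht.1]
  have hb : ‖b‖ = (1 - t) * ‖a - b‖ := calc
    ‖b‖ = ‖((t - 1 : ℝ) : ℂ) * (a - b)‖ := by congr 1; push_cast; linear_combination h
    _ = (1 - t) * ‖a - b‖ := by
      rw [norm_mul, norm_real, Real.norm_of_nonpos (by linarith [ht.2]), neg_sub]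
  rw [ha, hb]
  nlinarith [mul_nonneg (sq_nonneg (t - 1 / 2)) (sq_nonneg ‖a - b‖)]

section Lemniscate

variable {f g : ℂ[X]} {n : ℕ} {Γ : ℝ}

theorem Polynomial.IsMonicOfDegree.norm_eval_sub_le (hn : n ≠ 0) (hf : IsMonicOfDegree f n)
    (hg : IsMonicOfDegree g n) {z : ℂ} {R : ℝ} (hz : ‖z‖ ≤ R) :
    ‖f.eval z - g.eval z‖ ≤ ∑ k ∈ Icc 1 n, ‖f.coeff (n - k) - g.coeff (n - k)‖ * R ^ (n - k) := by
  simp_rw [← eval_sub, ← coeff_sub]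
  rw [sum_Icc_one_sub_eq_sum_range n fun m => ‖(f - g).coeff m‖ * R ^ m]
  exact norm_eval_le_sum_range (hf.natDegree_sub_lt hn hg) hz

theorem Polynomial.IsMonicOfDegree.norm_le_two_mul_of_isRoot_add_C_mul_sub (hn : n ≠ 0)
    (hf : IsMonicOfDegree f n) (hg : IsMonicOfDegree g n) (hΓ : 0 ≤ Γ)
    (hfΓ : ∀ m < n, ‖f.coeff m‖ ≤ Γ ^ (n - m)) (hgΓ : ∀ m < n, ‖g.coeff m‖ ≤ Γ ^ (n - m))
    {t : ℝ} (ht : t ∈ Set.Icc 0 1) {z : ℂ} (hz : (f + C (t : ℂ) * (g - f)).IsRoot z) :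
    ‖z‖ ≤ 2 * Γ := by
  have hp := hf.add_C_mul_sub hn hg (t : ℂ)
  refine hp.monic.norm_le_two_mul_of_isRoot hΓ (fun m hm => ?_) hz
  rw [hp.natDegree_eq] at hm ⊢
  have hmem := (convex_closedBall (0 : ℂ) (Γ ^ (n - m))).add_smul_sub_mem
    (mem_closedBall_zero_iff.2 (hfΓ m hm)) (mem_closedBall_zero_iff.2 (hgΓ m hm)) ht
  simpa [coeff_add, coeff_C_mul, coeff_sub] using hmem

theorem Polynomial.IsMonicOfDegree.norm_eval_mul_le_of_isRoot_add_C_mul_sub (hn : n ≠ 0)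
    (hf : IsMonicOfDegree f n) (hg : IsMonicOfDegree g n) (hΓ : 0 ≤ Γ)
    (hfΓ : ∀ m < n, ‖f.coeff m‖ ≤ Γ ^ (n - m)) (hgΓ : ∀ m < n, ‖g.coeff m‖ ≤ Γ ^ (n - m))
    {t : ℝ} (ht : t ∈ Set.Icc 0 1) {z : ℂ} (hz : (f + C (t : ℂ) * (g - f)).IsRoot z) :
    ‖(f * g).eval z‖ ≤
      ((∑ k ∈ Icc 1 n, ‖f.coeff (n - k) - g.coeff (n - k)‖ * (2 * Γ) ^ (n - k)) / 2) ^ 2 := by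
  have hzΓ := hf.norm_le_two_mul_of_isRoot_add_C_mul_sub hn hg hΓ hfΓ hgΓ ht hz
  have hroot : f.eval z + t * (g.eval z - f.eval z) = 0 := by simpa using hz.eq_zero
  rw [eval_mul, norm_mul]
  refine (norm_mul_norm_le_of_add_mul_sub_eq_zero ht hroot).trans ?_
  gcongr
  exact hf.norm_eval_sub_le hn hg hzΓ

end Lemniscate

theorem le_four_mul_rpow_of_div_four_pow_le {D E : ℝ} {n : ℕ} (hn : n ≠ 0) (hD : 0 ≤ D)
    (hE : 0 ≤ E) (h : (D / 4) ^ (n + n) ≤ (E / 2) ^ 2) :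
    D ≤ 4 * (2 : ℝ) ^ (-(1 : ℝ) / n) * E ^ ((1 : ℝ) / n) := by
  rw [← two_mul, pow_mul', pow_le_pow_iff_left₀ (by positivity) (by positivity) two_ne_zero,
    ← Real.rpow_natCast, ← Real.le_rpow_inv_iff_of_pos (by positivity) (by positivity)
      (by positivity), Real.div_rpow hE zero_le_two] at h
  rw [neg_div, Real.rpow_neg zero_le_two, one_div]
  calc D = 4 * (D / 4) := by ring
    _ ≤ 4 * (E ^ (n : ℝ)⁻¹ / 2 ^ (n : ℝ)⁻¹) := by gcongr
    _ = _ := by rw [div_eq_inv_mul]; ring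

/-- Root perturbation bound for monic polynomials: if `f = ∏ (z − α i)` and
`g = ∏ (z − β i)` are monic of degree `n` with coefficients `a_k = f.coeff (n−k)`,
`b_k = g.coeff (n−k)` (`1 ≤ k ≤ n`), and `Γ = max_k max(|a_k|^{1/k}, |b_k|^{1/k})`,
`γ = 2Γ`, then the roots can be enumerated so that
`max_i |α_i − β_i| ≤ 4·2^{−1/n} (∑_k |a_k − b_k| γ^{n−k})^{1/n}`. -/
theorem roots_continuity (n : ℕ) (hn : 0 < n) (α β : Fin n → ℂ)
    (f g : Polynomial ℂ)
    (hf : f = ∏ i, (Polynomial.X - Polynomial.C (α i)))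
    (hg : g = ∏ i, (Polynomial.X - Polynomial.C (β i)))
    (Γ : ℝ)
    (hΓ : Γ = (Finset.Icc 1 n).sup' (Finset.nonempty_Icc.mpr hn) (fun k =>
      max (‖f.coeff (n - k)‖ ^ ((1 : ℝ) / k))
          (‖g.coeff (n - k)‖ ^ ((1 : ℝ) / k)))) :
    ∃ σ : Equiv.Perm (Fin n), ∀ i,
      ‖α i - β (σ i)‖
        ≤ 4 * (2 : ℝ) ^ (-(1 : ℝ) / n) *
          (∑ k ∈ Finset.Icc 1 n,
            ‖f.coeff (n - k) - g.coeff (n - k)‖ * (2 * Γ) ^ (n - k))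
          ^ ((1 : ℝ) / n) := by
  have hfn : IsMonicOfDegree f n := by simpa [hf] using isMonicOfDegree_prod_X_sub_C α
  have hgn : IsMonicOfDegree g n := by simpa [hg] using isMonicOfDegree_prod_X_sub_C β
  have hΓ_ge := (sup'_le_iff _ _).1 hΓ.symm.le
  have hΓ0 : 0 ≤ Γ := (Real.rpow_nonneg (norm_nonneg _) _).trans
    ((le_max_left _ _).trans (hΓ_ge 1 (mem_Icc.2 ⟨le_rfl, hn⟩)))
  have hfΓ := norm_coeff_le_pow_of_rpow_le hΓ0 fun k hk => (max_le_iff.1 (hΓ_ge k hk)).1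
  have hgΓ := norm_coeff_le_pow_of_rpow_le hΓ0 fun k hk => (max_le_iff.1 (hΓ_ge k hk)).2
  set E := ∑ k ∈ Icc 1 n, ‖f.coeff (n - k) - g.coeff (n - k)‖ * (2 * Γ) ^ (n - k)
  set K : Set ℂ := {z | ‖(f * g).eval z‖ ≤ (E / 2) ^ 2}
  have hfg := hfn.mul hgn
  have hK : IsCompact K := isCompact_setOf_norm_eval_le _
    (natDegree_pos_iff_degree_pos.1 (by rw [hfg.natDegree_eq]; omega)) _
  obtain ⟨σ, hσ⟩ := exists_perm_mem_connectedComponentIn_of_continuous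
    (p := fun t : unitInterval => f + C (t : ℂ) * (g - f)) (t₀ := 0) (t₁ := 1) (α := α) (β := β)
    (fun t => hfn.add_C_mul_sub hn.ne' hgn _)
    (fun m => by simp only [coeff_add, coeff_C_mul]; fun_prop) hK
    (fun t z hz => hfn.norm_eval_mul_le_of_isRoot_add_C_mul_sub hn.ne' hgn hΓ0 hfΓ hgΓ t.2
      (mem_roots'.1 hz).2)
    (by simp [hf, roots_prod_X_sub_C_fintype]) (by simp [hg, roots_prod_X_sub_C_fintype])
  refine ⟨σ, fun i => le_four_mul_rpow_of_div_four_pow_le hn.ne' (norm_nonneg _)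
    (sum_nonneg fun k _ => by positivity) ?_⟩
  rw [← hfg.natDegree_eq]
  exact isPreconnected_connectedComponentIn.div_four_pow_natDegree_le hfg.monic
    (mem_connectedComponentIn (connectedComponentIn_nonempty_iff.1 ⟨_, hσ i⟩)) (hσ i)
    fun z hz => connectedComponentIn_subset K _ hz
end

section
/- Let I ⊂ ℝ be an interval and u : I → ℝ a smooth function such that max_{0≤l≤N+1} sup_{θ∈I} |u^{(l)}(θ)| ≤ C₂ and max_{0≤l≤N} |u^{(l)}(θ)| ≥ β for all θ ∈ I. Then for any ε > 0, the Lebesgue measure of {θ ∈ I : |u(θ)| ≤ ε} is at most 2^{N+2} (2C₂|I|/β + 1) (ε/β)^{1/N}. -/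
open MeasureTheory

section SublevelHelpers
open Set ENNReal


private lemma smooth_iter {u : ℝ → ℝ} (hu : ContDiff ℝ ((⊤:ℕ∞):WithTop ℕ∞) u) (k : ℕ) :
    ContDiff ℝ ((⊤:ℕ∞):WithTop ℕ∞) (iteratedDeriv k u) := by
  rw [iteratedDeriv_eq_iterate]; exact ContDiff.iterate_deriv k hu

private lemma mvt_abs {v : ℝ → ℝ} (hv : ContDiff ℝ ((⊤:ℕ∞):WithTop ℕ∞) v)
    {c d x y : ℝ} (hx : x ∈ Icc c d) (hy : y ∈ Icc c d) :
    ∃ ζ ∈ Icc c d, |v y - v x| = |deriv v ζ| * |y - x| := by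
  have key : ∀ p q : ℝ, p ∈ Icc c d → q ∈ Icc c d → p < q →
      ∃ ζ ∈ Icc c d, |v q - v p| = |deriv v ζ| * |q - p| := by
    intro p q hp hq hpq
    obtain ⟨ζ, hζ, hs⟩ := exists_deriv_eq_slope v hpq (hv.continuous.continuousOn)
      ((hv.differentiable (by simp)).differentiableOn)
    refine ⟨ζ, ⟨le_trans hp.1 hζ.1.le, le_trans hζ.2.le hq.2⟩, ?_⟩
    rw [hs, abs_div]
    rw [abs_of_pos (by linarith : (0:ℝ) < q - p)]
    field_simp [ne_of_gt (by linarith : (0:ℝ) < q - p)]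
  rcases lt_trichotomy x y with h | h | h
  · exact key x y hx hy h
  · exact ⟨x, hx, by simp [h]⟩
  · obtain ⟨ζ, hζ, hs⟩ := key y x hy hx h
    exact ⟨ζ, hζ, by rw [abs_sub_comm (v y), abs_sub_comm y, hs]⟩

private lemma lower_lip {v : ℝ → ℝ} (hv : ContDiff ℝ ((⊤:ℕ∞):WithTop ℕ∞) v)
    {c d lam : ℝ} (hder : ∀ θ ∈ Icc c d, lam ≤ |deriv v θ|) :
    ∀ x ∈ Icc c d, ∀ y ∈ Icc c d, lam * |y - x| ≤ |v y - v x| := by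
  intro x hx y hy
  obtain ⟨ζ, hζ, he⟩ := mvt_abs hv hx hy
  rw [he]
  exact mul_le_mul_of_nonneg_right (hder ζ hζ) (abs_nonneg _)

private lemma diam_vol {T : Set ℝ} {L : ℝ}
    (hbd : ∀ x ∈ T, ∀ y ∈ T, |x - y| ≤ L) : volume T ≤ ENNReal.ofReal L := by
  rcases T.eq_empty_or_nonempty with rfl | ⟨x₀, hx₀⟩
  · simp
  · have hBA : BddAbove T := ⟨x₀ + L, fun y hy => by
      have := hbd y hy x₀ hx₀; rw [abs_le] at this; linarith [this.2]⟩
    have hBB : BddBelow T := ⟨x₀ - L, fun y hy => by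
      have := hbd y hy x₀ hx₀; rw [abs_le] at this; linarith [this.1]⟩
    have hsub : T ⊆ Icc (sInf T) (sSup T) :=
      fun y hy => ⟨csInf_le hBB hy, le_csSup hBA hy⟩
    have h1 : sSup T ≤ sInf T + L := by
      apply csSup_le ⟨x₀, hx₀⟩
      intro x hx
      have : x - L ≤ sInf T := by
        apply le_csInf ⟨x₀, hx₀⟩
        intro y hy
        have := hbd x hx y hy; rw [abs_le] at this; linarith [this.2]
      linarith
    calc volume T ≤ volume (Icc (sInf T) (sSup T)) := measure_mono hsub
      _ = ENNReal.ofReal (sSup T - sInf T) := Real.volume_Icc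
      _ ≤ ENNReal.ofReal L := ENNReal.ofReal_le_ofReal (by linarith)

private lemma sign_const {v : ℝ → ℝ} (hv : ContDiff ℝ ((⊤:ℕ∞):WithTop ℕ∞) v)
    {c d lam : ℝ} (hlam : 0 < lam) (hder : ∀ θ ∈ Icc c d, lam ≤ |deriv v θ|) :
    (∀ θ ∈ Icc c d, 0 < deriv v θ) ∨ (∀ θ ∈ Icc c d, deriv v θ < 0) := by
  by_contra hcon
  push_neg at hcon
  obtain ⟨⟨θ₁, hθ₁, h1⟩, ⟨θ₂, hθ₂, h2⟩⟩ := hcon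
  have hc : ContinuousOn (deriv v) (uIcc θ₁ θ₂) :=
    (hv.continuous_deriv (by exact_mod_cast le_top)).continuousOn
  have h0 : (0:ℝ) ∈ uIcc (deriv v θ₁) (deriv v θ₂) := by
    rw [Set.mem_uIcc]; left; exact ⟨h1, h2⟩
  obtain ⟨ζ, hζ, hz⟩ := intermediate_value_uIcc hc h0
  have hmem : ζ ∈ Icc c d := by
    have hsub : uIcc θ₁ θ₂ ⊆ Icc c d := by
      intro z hz
      rcases Set.mem_uIcc.mp hz with ⟨ha, hb⟩ | ⟨ha, hb⟩
      · exact ⟨le_trans hθ₁.1 ha, le_trans hb hθ₂.2⟩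
      · exact ⟨le_trans hθ₂.1 ha, le_trans hb hθ₁.2⟩
    exact hsub hζ
  have := hder ζ hmem
  rw [hz] at this; simp at this; linarith

private lemma lemA (u : ℝ → ℝ) (hu : ContDiff ℝ ((⊤:ℕ∞):WithTop ℕ∞) u) :
    ∀ k : ℕ, 1 ≤ k → ∀ c d lam ε : ℝ, 0 < lam → 0 < ε →
    (∀ θ ∈ Icc c d, lam ≤ |iteratedDeriv k u θ|) →
    volume {θ ∈ Icc c d | |u θ| ≤ ε} ≤
      ENNReal.ofReal (((2:ℝ)^(k+1) - 2) * (ε/lam) ^ ((1:ℝ)/(k:ℝ))) := by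
  intro k hk
  induction k, hk using Nat.le_induction with
  | base =>
    intro c d lam ε hlam hε hder
    have hder' : ∀ θ ∈ Icc c d, lam ≤ |deriv u θ| := by
      intro θ hθ; have := hder θ hθ; rwa [iteratedDeriv_one] at this
    have hlip := lower_lip hu hder'
    refine le_trans (diam_vol (L := 2*ε/lam) ?_) (ENNReal.ofReal_le_ofReal ?_)
    · rintro x ⟨hx1, hx2⟩ y ⟨hy1, hy2⟩
      have hl := hlip y hy1 x hx1
      have hux := abs_le.mp hx2
      have huy := abs_le.mp hy2
      have h2 : |u x - u y| ≤ 2 * ε := by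
        rw [abs_le]; constructor <;> linarith [hux.1, hux.2, huy.1, huy.2]
      rw [le_div_iff₀ hlam, mul_comm]
      linarith
    · norm_num
      rw [mul_div_assoc]
  | succ k hk ih =>
    intro c d lam ε hlam hε hder
    rw [show ((k+1:ℕ):ℝ) = (k:ℝ)+1 by push_cast; ring]
    set v := iteratedDeriv k u with hv_def
    have hv : ContDiff ℝ ((⊤:ℕ∞):WithTop ℕ∞) v := smooth_iter hu k
    have hder' : ∀ θ ∈ Icc c d, lam ≤ |deriv v θ| := by
      intro θ hθ
      have := hder θ hθ
      rwa [iteratedDeriv_succ] at this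
    have hkR : (0:ℝ) < (k:ℝ) := by exact_mod_cast hk
    have hx0 : (0:ℝ) < ε / lam := div_pos hε hlam
    set X : ℝ := (ε/lam) ^ ((1:ℝ)/((k:ℝ)+1)) with hX_def
    have hXpos : 0 < X := Real.rpow_pos_of_pos hx0 _
    set δ : ℝ := lam * X with hδ_def
    have hδ : 0 < δ := mul_pos hlam hXpos
    -- monotonicity
    have hmo : MonotoneOn v (Icc c d) ∨ AntitoneOn v (Icc c d) := by
      rcases sign_const hv hlam hder' with hs | hs
      · exact Or.inl ((strictMonoOn_of_deriv_pos (convex_Icc c d) hv.continuous.continuousOn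
          (fun x hx => hs x (interior_subset hx))).monotoneOn)
      · exact Or.inr ((strictAntiOn_of_deriv_neg (convex_Icc c d) hv.continuous.continuousOn
          (fun x hx => hs x (interior_subset hx))).antitoneOn)
    have hbtw : ∀ x ∈ Icc c d, ∀ y ∈ Icc c d, ∀ θ, x ≤ θ → θ ≤ y →
        v θ ∈ uIcc (v x) (v y) := by
      intro x hx y hy θ hxθ hθy
      have hθ : θ ∈ Icc c d := ⟨le_trans hx.1 hxθ, le_trans hθy hy.2⟩
      rcases hmo with hm | hm
      · rw [Set.mem_uIcc]; left; exact ⟨hm hx hθ hxθ, hm hθ hy hθy⟩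
      · rw [Set.mem_uIcc]; right; exact ⟨hm hθ hy hθy, hm hx hθ hxθ⟩
    set S := {θ ∈ Icc c d | |u θ| ≤ ε} with hS_def
    set A := {θ ∈ Icc c d | v θ ≤ -δ} with hA_def
    set B := {θ ∈ Icc c d | |v θ| ≤ δ} with hB_def
    set C := {θ ∈ Icc c d | δ ≤ v θ} with hC_def
    have hcov : S ⊆ (S ∩ A) ∪ ((S ∩ B) ∪ (S ∩ C)) := by
      intro θ hθ
      rcases le_total (v θ) (-δ) with h | h
      · exact Or.inl ⟨hθ, hθ.1, h⟩
      rcases le_total δ (v θ) with h' | h'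
      · exact Or.inr (Or.inr ⟨hθ, hθ.1, h'⟩)
      · exact Or.inr (Or.inl ⟨hθ, hθ.1, abs_le.mpr ⟨by linarith, h'⟩⟩)
    -- bound for B
    have hB_bound : volume (S ∩ B) ≤ ENNReal.ofReal (2 * X) := by
      apply diam_vol
      rintro x ⟨-, hx1, hx2⟩ y ⟨-, hy1, hy2⟩
      have hl := lower_lip hv hder' y hy1 x hx1
      have h2 : |v x - v y| ≤ 2 * δ := by
        have := abs_le.mp hx2; have := abs_le.mp hy2
        rw [abs_le]; constructor <;> linarith [abs_le.mp hx2, abs_le.mp hy2]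
      have : lam * |x - y| ≤ 2 * δ := le_trans hl h2
      rw [hδ_def] at this
      nlinarith [abs_nonneg (x - y)]
    -- generic bound for A and C
    have hside : ∀ T : Set ℝ, T = A ∨ T = C →
        volume (S ∩ T) ≤ ENNReal.ofReal (((2:ℝ)^(k+1) - 2) * (ε/δ) ^ ((1:ℝ)/(k:ℝ))) := by
      intro T hT
      have hTsub : T ⊆ Icc c d := by rcases hT with rfl | rfl <;> exact fun θ hθ => hθ.1
      have hTabs : ∀ θ ∈ T, δ ≤ |v θ| := by
        rcases hT with rfl | rfl <;> intro θ hθ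
        · exact le_abs.mpr (Or.inr (by linarith [hθ.2]))
        · exact le_abs.mpr (Or.inl hθ.2)
      have hTclosed : IsClosed T := by
        rcases hT with rfl | rfl
        · exact (isClosed_Icc.inter (IsClosed.preimage hv.continuous isClosed_Iic))
        · exact (isClosed_Icc.inter (IsClosed.preimage hv.continuous isClosed_Ici))
      rcases T.eq_empty_or_nonempty with rfl | hTne
      · simp
      have hbb : BddBelow T := BddBelow.mono hTsub bddBelow_Icc
      have hba : BddAbove T := BddAbove.mono hTsub bddAbove_Icc
      have hc'A : sInf T ∈ T := hTclosed.csInf_mem hTne hbb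
      have hd'A : sSup T ∈ T := hTclosed.csSup_mem hTne hba
      have hullT : Icc (sInf T) (sSup T) ⊆ T := by
        intro θ hθ
        have hvm := hbtw _ (hTsub hc'A) _ (hTsub hd'A) θ hθ.1 hθ.2
        rcases hT with rfl | rfl
        · refine ⟨⟨le_trans (hTsub hc'A).1 hθ.1, le_trans hθ.2 (hTsub hd'A).2⟩, ?_⟩
          rcases Set.mem_uIcc.mp hvm with h | h
          · exact le_trans h.2 hd'A.2
          · exact le_trans h.2 hc'A.2
        · refine ⟨⟨le_trans (hTsub hc'A).1 hθ.1, le_trans hθ.2 (hTsub hd'A).2⟩, ?_⟩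
          rcases Set.mem_uIcc.mp hvm with h | h
          · exact le_trans hc'A.2 h.1
          · exact le_trans hd'A.2 h.1
      have hder2 : ∀ θ ∈ Icc (sInf T) (sSup T), δ ≤ |iteratedDeriv k u θ| :=
        fun θ hθ => hTabs θ (hullT hθ)
      have hSsub : S ∩ T ⊆ {θ ∈ Icc (sInf T) (sSup T) | |u θ| ≤ ε} := by
        rintro θ ⟨hθS, hθT⟩
        exact ⟨⟨csInf_le hbb hθT, le_csSup hba hθT⟩, hθS.2⟩
      exact le_trans (measure_mono hSsub) (ih (sInf T) (sSup T) δ ε hδ hε hder2)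
    -- key algebra
    have key2 : (ε/δ) ^ ((1:ℝ)/(k:ℝ)) = X := by
      have h1 : ε / δ = (ε/lam) ^ (1 - (1:ℝ)/((k:ℝ)+1)) := by
        rw [Real.rpow_sub hx0, Real.rpow_one, hδ_def, div_div]
      rw [h1, ← Real.rpow_mul hx0.le, hX_def]
      congr 1
      have hk1 : (k:ℝ) + 1 ≠ 0 := by positivity
      field_simp
      ring
    have hA' := hside A (Or.inl rfl)
    have hC' := hside C (Or.inr rfl)
    rw [key2] at hA' hC'
    have h2c : (0:ℝ) ≤ (2:ℝ)^(k+1) - 2 := by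
      have : (2:ℝ)^1 ≤ 2^(k+1) := pow_le_pow_right₀ one_le_two (by omega)
      simpa using this
    calc volume S ≤ volume (S ∩ A) + (volume (S ∩ B) + volume (S ∩ C)) := by
          refine le_trans (measure_mono hcov) (le_trans (measure_union_le _ _) ?_)
          exact add_le_add_right (measure_union_le _ _) _
      _ ≤ ENNReal.ofReal (((2:ℝ)^(k+1)-2)*X) +
          (ENNReal.ofReal (2*X) + ENNReal.ofReal (((2:ℝ)^(k+1)-2)*X)) :=
          add_le_add hA' (add_le_add hB_bound hC')
      _ = ENNReal.ofReal (((2:ℝ)^(k+1)-2)*X + (2*X + ((2:ℝ)^(k+1)-2)*X)) := by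
          have hn1 : (0:ℝ) ≤ ((2:ℝ)^(k+1)-2)*X := mul_nonneg h2c hXpos.le
          have hn2 : (0:ℝ) ≤ 2*X := by positivity
          rw [← ENNReal.ofReal_add hn2 hn1, ← ENNReal.ofReal_add hn1 (by linarith)]
      _ ≤ ENNReal.ofReal (((2:ℝ)^(k+1+1) - 2) * X) := by
          apply ENNReal.ofReal_le_ofReal
          apply le_of_eq
          rw [pow_succ]
          ring

private lemma piece_bound (N : ℕ) (hN : 1 ≤ N) (a b : ℝ) (u : ℝ → ℝ)
    (hu : ContDiff ℝ ((⊤:ℕ∞):WithTop ℕ∞) u) (C₂ β : ℝ) (hC : 1 ≤ C₂) (hβ : 0 < β)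
    (hupper : ∀ l ≤ N + 1, ∀ θ ∈ Icc a b, |iteratedDeriv l u θ| ≤ C₂)
    (hlower : ∀ θ ∈ Icc a b, ∃ l ≤ N, β ≤ |iteratedDeriv l u θ|)
    (ε : ℝ) (hε : 0 < ε) (hεβ : 2 * ε < β) (c d : ℝ)
    (hsub : Icc c d ⊆ Icc a b) (hlen : d - c ≤ β / (2 * C₂)) :
    volume {θ ∈ Icc c d | |u θ| ≤ ε} ≤
      ENNReal.ofReal ((2:ℝ)^(N+2) * (ε/β) ^ ((1:ℝ)/(N:ℝ))) := by
  have hC0 : (0:ℝ) < C₂ := lt_of_lt_of_le one_pos hC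
  rcases lt_or_ge d c with hdc | hdc
  · have he : Icc c d = ∅ := Icc_eq_empty (not_le.mpr hdc)
    rw [he]
    simp
  have hcmem : c ∈ Icc a b := hsub ⟨le_refl c, hdc⟩
  obtain ⟨l, hlN, hl⟩ := hlower c hcmem
  have hlip : ∀ θ ∈ Icc c d, |iteratedDeriv l u θ - iteratedDeriv l u c| ≤ β/2 := by
    intro θ hθ
    have hw := smooth_iter hu l
    obtain ⟨ζ, hζ, he⟩ := mvt_abs hw (x := c) (y := θ) ⟨le_refl c, hdc⟩ hθ
    rw [he]
    have hdw : |deriv (iteratedDeriv l u) ζ| ≤ C₂ := by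
      rw [← iteratedDeriv_succ]
      exact hupper (l+1) (by omega) ζ (hsub hζ)
    have hd2 : |θ - c| ≤ β/(2*C₂) := by
      rw [abs_of_nonneg (by linarith [hθ.1])]
      linarith [hθ.2]
    calc |deriv (iteratedDeriv l u) ζ| * |θ - c| ≤ C₂ * (β/(2*C₂)) :=
          mul_le_mul hdw hd2 (abs_nonneg _) hC0.le
      _ = β/2 := by field_simp
  have hlow2 : ∀ θ ∈ Icc c d, β/2 ≤ |iteratedDeriv l u θ| := by
    intro θ hθ
    have h1 := hlip θ hθ
    have h2 : |iteratedDeriv l u c - iteratedDeriv l u θ| ≤ β/2 := by rwa [abs_sub_comm]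
    linarith [abs_sub_abs_le_abs_sub (iteratedDeriv l u c) (iteratedDeriv l u θ), hl]
  rcases Nat.eq_zero_or_pos l with rfl | hl1
  · have hempty : {θ ∈ Icc c d | |u θ| ≤ ε} = ∅ := by
      ext θ
      simp only [Set.mem_setOf_eq, Set.mem_empty_iff_false, iff_false, not_and]
      intro hθ
      have := hlow2 θ hθ
      rw [iteratedDeriv_zero] at this
      intro hc2
      linarith
    rw [hempty]
    simp
  · have hmain := lemA u hu l hl1 c d (β/2) ε (by linarith) hε hlow2
    refine le_trans hmain (ENNReal.ofReal_le_ofReal ?_)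
    have hlR : (0:ℝ) < (l:ℝ) := by exact_mod_cast hl1
    have hNR : (0:ℝ) < (N:ℝ) := by exact_mod_cast hN
    have hx : ε/(β/2) = 2*(ε/β) := by field_simp
    have hxpos : (0:ℝ) < 2*(ε/β) := by positivity
    have hxle1 : 2*(ε/β) ≤ 1 := by
      have h3 : 2*(ε/β) = (2*ε)/β := by ring
      rw [h3, div_le_one hβ]; linarith
    have e1 : (2*(ε/β)) ^ ((1:ℝ)/(l:ℝ)) ≤ (2*(ε/β)) ^ ((1:ℝ)/(N:ℝ)) := by
      apply Real.rpow_le_rpow_of_exponent_ge hxpos hxle1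
      apply div_le_div_of_nonneg_left one_pos.le hlR
      exact_mod_cast hlN
    have e2 : (2*(ε/β)) ^ ((1:ℝ)/(N:ℝ)) = 2^((1:ℝ)/(N:ℝ)) * (ε/β)^((1:ℝ)/(N:ℝ)) :=
      Real.mul_rpow (by norm_num) (by positivity)
    have e3 : (2:ℝ)^((1:ℝ)/(N:ℝ)) ≤ 2 := by
      calc (2:ℝ)^((1:ℝ)/(N:ℝ)) ≤ 2^(1:ℝ) := by
            apply Real.rpow_le_rpow_of_exponent_le one_le_two
            rw [div_le_one hNR]
            exact_mod_cast hN
        _ = 2 := Real.rpow_one 2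
    have e4 : (2:ℝ)^(l+1) - 2 ≤ 2^(N+1) := by
      have : (2:ℝ)^(l+1) ≤ 2^(N+1) := pow_le_pow_right₀ one_le_two (by omega)
      linarith
    have hr1 : (0:ℝ) ≤ (2*(ε/β)) ^ ((1:ℝ)/(l:ℝ)) := Real.rpow_nonneg hxpos.le _
    have hr2 : (0:ℝ) ≤ (ε/β)^((1:ℝ)/(N:ℝ)) := Real.rpow_nonneg (by positivity) _
    calc ((2:ℝ)^(l+1) - 2) * (ε/(β/2))^((1:ℝ)/(l:ℝ))
        = ((2:ℝ)^(l+1) - 2) * (2*(ε/β))^((1:ℝ)/(l:ℝ)) := by rw [hx]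
      _ ≤ (2:ℝ)^(N+1) * (2*(ε/β))^((1:ℝ)/(N:ℝ)) := by
          apply mul_le_mul e4 e1 hr1 (by positivity)
      _ = (2:ℝ)^(N+1) * (2^((1:ℝ)/(N:ℝ)) * (ε/β)^((1:ℝ)/(N:ℝ))) := by rw [e2]
      _ ≤ (2:ℝ)^(N+1) * (2 * (ε/β)^((1:ℝ)/(N:ℝ))) := by
          apply mul_le_mul_of_nonneg_left (mul_le_mul_of_nonneg_right e3 hr2) (by positivity)
      _ = (2:ℝ)^(N+2) * (ε/β)^((1:ℝ)/(N:ℝ)) := by rw [pow_succ]; ring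

end SublevelHelpers

/-- Quantitative sublevel-set estimate: if `u` is smooth on the interval `I = [a,b]`,
all derivatives up to order `N+1` are bounded by `C₂` on `I`, and at every point of `I`
some derivative of order `≤ N` is at least `β`, then for every `ε > 0`,
`Leb {θ ∈ I : |u θ| ≤ ε} ≤ 2^{N+2} (2C₂|I|/β + 1)(ε/β)^{1/N}`. -/
theorem sublevel_measure_bound (N : ℕ) (hN : 1 ≤ N) (a b : ℝ) (u : ℝ → ℝ)
    (hu : ContDiff ℝ (⊤ : ℕ∞) u) (C₂ β : ℝ) (hC : 1 ≤ C₂) (hβ : 0 < β)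
    (hupper : ∀ l ≤ N + 1, ∀ θ ∈ Set.Icc a b, |iteratedDeriv l u θ| ≤ C₂)
    (hlower : ∀ θ ∈ Set.Icc a b, ∃ l ≤ N, β ≤ |iteratedDeriv l u θ|)
    (ε : ℝ) (hε : 0 < ε) :
    volume {θ ∈ Set.Icc a b | |u θ| ≤ ε}
      ≤ ENNReal.ofReal
        ((2 : ℝ) ^ (N + 2) * (2 * C₂ * (b - a) / β + 1) * (ε / β) ^ ((1 : ℝ) / N)) := by
  have hu' : ContDiff ℝ ((⊤:ℕ∞):WithTop ℕ∞) u := hu.of_le (by simp)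
  have hC0 : (0:ℝ) < C₂ := lt_of_lt_of_le one_pos hC
  have hNR : (0:ℝ) < (N:ℝ) := by exact_mod_cast hN
  rcases lt_or_ge b a with hba | hab
  · have hz : volume {θ ∈ Set.Icc a b | |u θ| ≤ ε} ≤ 0 := by
      calc volume {θ ∈ Set.Icc a b | |u θ| ≤ ε} ≤ volume (Set.Icc a b) :=
            measure_mono (Set.sep_subset _ _)
        _ = ENNReal.ofReal (b - a) := Real.volume_Icc
        _ = 0 := ENNReal.ofReal_eq_zero.mpr (by linarith)
    exact le_trans hz zero_le
  have hβC : β ≤ C₂ := by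
    obtain ⟨l, hlN, hl⟩ := hlower a ⟨le_refl a, hab⟩
    exact le_trans hl (hupper l (by omega) a ⟨le_refl a, hab⟩)
  rcases le_or_gt β (2*ε) with hcase | hcase
  · -- trivial case : ε ≥ β/2
    have h14 : (1:ℝ)/4 ≤ (ε/β)^((1:ℝ)/(N:ℝ)) := by
      have h12 : (1:ℝ)/2 ≤ ε/β := by rw [le_div_iff₀ hβ]; linarith
      rcases le_or_gt (ε/β) 1 with h1 | h1
      · have ha1 : ((1:ℝ)/2)^((1:ℝ)) ≤ ((1:ℝ)/2)^((1:ℝ)/(N:ℝ)) := by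
          apply Real.rpow_le_rpow_of_exponent_ge (by norm_num) (by norm_num)
          rw [div_le_one hNR]; exact_mod_cast hN
        have ha2 : ((1:ℝ)/2)^((1:ℝ)/(N:ℝ)) ≤ (ε/β)^((1:ℝ)/(N:ℝ)) :=
          Real.rpow_le_rpow (by norm_num) h12 (by positivity)
        rw [Real.rpow_one] at ha1
        linarith
      · have ha2 : (1:ℝ) ≤ (ε/β)^((1:ℝ)/(N:ℝ)) := by
          have := Real.rpow_le_rpow zero_le_one h1.le (by positivity : (0:ℝ) ≤ (1:ℝ)/(N:ℝ))
          rwa [Real.one_rpow] at this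
        linarith
    have h8 : (8:ℝ) ≤ 2^(N+2) := by
      calc (8:ℝ) = 2^3 := by norm_num
        _ ≤ 2^(N+2) := pow_le_pow_right₀ one_le_two (by omega)
    refine le_trans (measure_mono (Set.sep_subset _ _)) ?_
    rw [Real.volume_Icc]
    apply ENNReal.ofReal_le_ofReal
    have hY : 2*(b-a) ≤ 2*C₂*(b-a)/β := by
      rw [le_div_iff₀ hβ]
      nlinarith [sub_nonneg.mpr hab]
    have hY0 : (0:ℝ) ≤ 2*C₂*(b-a)/β := by
      apply div_nonneg _ hβ.le
      nlinarith [sub_nonneg.mpr hab]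
    have s1 : 8*(2*C₂*(b-a)/β+1)*(1/4) ≤ 2^(N+2)*(2*C₂*(b-a)/β+1)*(ε/β)^((1:ℝ)/(N:ℝ)) := by
      apply mul_le_mul (mul_le_mul h8 le_rfl (by linarith) (by positivity)) h14
        (by norm_num) (by positivity)
    linarith
  · -- main case
    set S := {θ ∈ Set.Icc a b | |u θ| ≤ ε} with hS_def
    set x := 2*C₂*(b-a)/β with hx_def
    have hba0 : (0:ℝ) ≤ b - a := sub_nonneg.mpr hab
    have hx0 : (0:ℝ) ≤ x := by
      apply div_nonneg _ hβ.le
      nlinarith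
    set K := max ⌈x⌉₊ 1 with hK_def
    have hK1 : 1 ≤ K := le_max_right _ _
    set h := β/(2*C₂) with hh_def
    have hh0 : (0:ℝ) < h := by positivity
    have hxh : x * h = b - a := by
      rw [hx_def, hh_def]
      field_simp
    have hbK : b ≤ a + K * h := by
      have h1 : x ≤ (K:ℝ) := by
        refine le_trans (Nat.le_ceil x) ?_
        exact_mod_cast le_max_left ⌈x⌉₊ 1
      nlinarith
    have hcover : Set.Icc a b ⊆ ⋃ i ∈ Finset.range K, Set.Icc (a + i*h) (a + i*h + h) := by
      intro θ hθ
      have hθa : (0:ℝ) ≤ θ - a := by linarith [hθ.1]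
      set i := min ⌊(θ - a)/h⌋₊ (K - 1) with hi_def
      have hiK : i < K := lt_of_le_of_lt (min_le_right _ _) (by omega)
      refine Set.mem_biUnion (Finset.mem_range.mpr hiK) ?_
      constructor
      · have hi1 : (i:ℝ) ≤ (θ - a)/h := by
          refine le_trans ?_ (Nat.floor_le (by positivity))
          exact_mod_cast min_le_left _ _
        have := (le_div_iff₀ hh0).mp hi1
        linarith
      · rcases le_or_gt ⌊(θ-a)/h⌋₊ (K-1) with hc | hc
        · have hieq : i = ⌊(θ-a)/h⌋₊ := min_eq_left hc
          have h2 : (θ - a)/h < (i:ℝ) + 1 := by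
            rw [hieq]
            exact_mod_cast Nat.lt_floor_add_one ((θ-a)/h)
          have := (div_lt_iff₀ hh0).mp h2
          nlinarith
        · have hieq : i = K - 1 := min_eq_right (by omega)
          have hKi : (K:ℝ) = (i:ℝ) + 1 := by
            rw [hieq]
            push_cast [Nat.cast_sub hK1]
            ring
          have := hθ.2
          rw [hKi] at hbK
          linarith
    have hSsub : S ⊆ ⋃ i ∈ Finset.range K,
        {θ ∈ Set.Icc (a + i*h) (min (a + i*h + h) b) | |u θ| ≤ ε} := by
      intro θ hθ
      obtain ⟨i, hi, hmem⟩ := Set.mem_iUnion₂.mp (hcover hθ.1)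
      exact Set.mem_biUnion hi ⟨⟨hmem.1, le_min hmem.2 hθ.1.2⟩, hθ.2⟩
    have hpiece : ∀ i : ℕ, volume {θ ∈ Set.Icc (a + i*h) (min (a + i*h + h) b) | |u θ| ≤ ε}
        ≤ ENNReal.ofReal ((2:ℝ)^(N+2) * (ε/β) ^ ((1:ℝ)/(N:ℝ))) := by
      intro i
      apply piece_bound N hN a b u hu' C₂ β hC hβ hupper hlower ε hε hcase
      · intro θ hθ
        refine ⟨le_trans ?_ hθ.1, le_trans hθ.2 (min_le_right _ _)⟩
        have : (0:ℝ) ≤ (i:ℝ)*h := by positivity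
        linarith
      · have := min_le_left (a + i*h + h) b
        rw [hh_def]
        linarith
    calc volume S
        ≤ ∑ i ∈ Finset.range K, volume {θ ∈ Set.Icc (a+i*h) (min (a+i*h+h) b) | |u θ| ≤ ε} :=
          le_trans (measure_mono hSsub) (measure_biUnion_finset_le _ _)
      _ ≤ ∑ i ∈ Finset.range K, ENNReal.ofReal ((2:ℝ)^(N+2) * (ε/β) ^ ((1:ℝ)/(N:ℝ))) :=
          Finset.sum_le_sum (fun i _ => hpiece i)
      _ = (K : ENNReal) * ENNReal.ofReal ((2:ℝ)^(N+2) * (ε/β) ^ ((1:ℝ)/(N:ℝ))) := by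
          rw [Finset.sum_const, Finset.card_range, nsmul_eq_mul]
      _ ≤ ENNReal.ofReal ((x+1) * ((2:ℝ)^(N+2) * (ε/β) ^ ((1:ℝ)/(N:ℝ)))) := by
          rw [← ENNReal.ofReal_natCast K, ← ENNReal.ofReal_mul (by positivity)]
          apply ENNReal.ofReal_le_ofReal
          apply mul_le_mul_of_nonneg_right _ (by positivity)
          have hceil : (⌈x⌉₊:ℝ) ≤ x + 1 := (Nat.ceil_lt_add_one hx0).le
          rw [hK_def]
          push_cast [Nat.cast_max]
          exact max_le hceil (by linarith)
      _ ≤ ENNReal.ofReal ((2:ℝ)^(N+2) * (x + 1) * (ε/β) ^ ((1:ℝ)/(N:ℝ))) := by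
          apply ENNReal.ofReal_le_ofReal
          apply le_of_eq
          ring
end

section
/- Let u₁,…,u_J be smooth functions on an open interval I with sup_{θ∈I} |u_j^{(l)}(θ)| ≤ C₁ for all l ≤ N := m₁ + ⋯ + m_J, and max_{0≤l≤m_j} |u_j^{(l)}(θ)| ≥ β for all θ ∈ I and each j, where C₁ ≥ 1. If u = u₁⋯u_J, then max_{0≤l≤N} |u^{(l)}(θ)| ≥ (1/e)^{J^{8N}} (β/C₁²)^{J^{N+1}} for all θ ∈ I. -/
open Finset


private theorem pascal_sum (n : ℕ) (A B : ℕ → ℝ) :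
    ∑ pq ∈ antidiagonal n, (n.choose pq.1 : ℝ) * (A (pq.1+1) * B pq.2 + A pq.1 * B (pq.2+1))
      = ∑ pq ∈ antidiagonal (n+1), ((n+1).choose pq.1 : ℝ) * (A pq.1 * B pq.2) := by
  have hdouble :
      (n.choose 0 : ℝ) * (A 0 * B (n+1)) + ∑ pq ∈ antidiagonal n,
          (n.choose (pq.1+1) : ℝ) * (A (pq.1+1) * B pq.2)
        = (n.choose (n+1) : ℝ) * (A (n+1) * B 0) + ∑ pq ∈ antidiagonal n,
          (n.choose pq.1 : ℝ) * (A pq.1 * B (pq.2+1)) := by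
    rw [show ((n.choose 0 : ℝ)) * (A 0 * B (n+1)) + ∑ pq ∈ antidiagonal n,
          (n.choose (pq.1+1) : ℝ) * (A (pq.1+1) * B pq.2)
        = ∑ pq ∈ antidiagonal (n+1), (n.choose pq.1 : ℝ) * (A pq.1 * B pq.2) by
      rw [Finset.Nat.antidiagonal_succ, sum_cons, sum_map]; rfl]
    rw [Finset.Nat.antidiagonal_succ', sum_cons, sum_map]; rfl
  rw [Finset.Nat.antidiagonal_succ, sum_cons, sum_map]
  simp only [mul_add, sum_add_distrib, Nat.choose_succ_succ, Nat.cast_add, add_mul,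
    Nat.choose_zero_right, Nat.cast_one, Nat.choose_succ_self, Nat.cast_zero, zero_mul,
    zero_add, Function.Embedding.coe_prodMap, Prod.map_fst, Prod.map_snd, Function.Embedding.coeFn_mk,
    Function.Embedding.refl_apply, Nat.succ_eq_add_one] at hdouble ⊢
  linarith [hdouble]

private theorem itd_mul (f g : ℝ → ℝ) (hf : ContDiff ℝ (⊤ : ℕ∞) f) (hg : ContDiff ℝ (⊤ : ℕ∞) g) :
    ∀ (n : ℕ) (x : ℝ), iteratedDeriv n (fun t => f t * g t) x
      = ∑ pq ∈ antidiagonal n,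
          (n.choose pq.1 : ℝ) * (iteratedDeriv pq.1 f x * iteratedDeriv pq.2 g x) := by
  have hdf : ∀ m : ℕ, Differentiable ℝ (iteratedDeriv m f) :=
    fun m => hf.differentiable_iteratedDeriv m (by exact_mod_cast ENat.coe_lt_top m)
  have hdg : ∀ m : ℕ, Differentiable ℝ (iteratedDeriv m g) :=
    fun m => hg.differentiable_iteratedDeriv m (by exact_mod_cast ENat.coe_lt_top m)
  intro n
  induction n with
  | zero => intro x; simp
  | succ n ih =>
    intro x
    rw [iteratedDeriv_succ]
    have : iteratedDeriv n (fun t => f t * g t) = fun y => ∑ pq ∈ antidiagonal n,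
        (n.choose pq.1 : ℝ) * (iteratedDeriv pq.1 f y * iteratedDeriv pq.2 g y) :=
      funext fun y => ih y
    rw [this]
    rw [deriv_fun_sum (fun pq _ => (((hdf pq.1 x).mul (hdg pq.2 x)).const_mul _))]
    have : ∀ pq : ℕ × ℕ, pq ∈ antidiagonal n →
        deriv (fun y => (n.choose pq.1 : ℝ) * (iteratedDeriv pq.1 f y * iteratedDeriv pq.2 g y)) x
        = (n.choose pq.1 : ℝ) * (iteratedDeriv (pq.1+1) f x * iteratedDeriv pq.2 g x
            + iteratedDeriv pq.1 f x * iteratedDeriv (pq.2+1) g x) := by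
      intro pq _
      rw [deriv_const_mul (d := fun y => iteratedDeriv pq.1 f y * iteratedDeriv pq.2 g y) _
          ((hdf pq.1 x).mul (hdg pq.2 x)),
        deriv_fun_mul (hdf pq.1 x) (hdg pq.2 x), ← iteratedDeriv_succ, ← iteratedDeriv_succ]
    rw [sum_congr rfl this]
    exact pascal_sum n (fun i => iteratedDeriv i f x) (fun i => iteratedDeriv i g x)


private theorem sum_adt_succ {M : Type*} [AddCommMonoid M] (J n : ℕ) (F : (Fin (J+1) → ℕ) → M) :
    ∑ k ∈ Finset.Nat.antidiagonalTuple (J+1) n, F k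
      = ∑ pq ∈ antidiagonal n, ∑ k ∈ Finset.Nat.antidiagonalTuple J pq.2, F (Fin.cons pq.1 k) := by
  rw [← Finset.sum_sigma (antidiagonal n) (fun pq => Finset.Nat.antidiagonalTuple J pq.2)
      (fun x => F (Fin.cons x.1.1 x.2))]
  refine Finset.sum_nbij' (i := fun (k : Fin (J+1) → ℕ) => (⟨(k 0, ∑ j : Fin J, k j.succ), Fin.tail k⟩ :
      Σ pq : ℕ × ℕ, Fin J → ℕ)) (j := fun x => Fin.cons x.1.1 x.2) ?_ ?_ ?_ ?_ ?_
  · intro k hk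
    rw [Finset.Nat.mem_antidiagonalTuple] at hk
    refine Finset.mem_sigma.2 ⟨?_, ?_⟩
    · rw [Finset.HasAntidiagonal.mem_antidiagonal]; rw [← hk, Fin.sum_univ_succ]
    · rw [Finset.Nat.mem_antidiagonalTuple]; rfl
  · intro x hx
    rw [Finset.mem_sigma, Finset.HasAntidiagonal.mem_antidiagonal, Finset.Nat.mem_antidiagonalTuple] at hx
    rw [Finset.Nat.mem_antidiagonalTuple, Fin.sum_univ_succ]
    simp only [Fin.cons_zero]
    simp only [Fin.cons_succ]
    rw [hx.2, hx.1]
  · intro k hk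
    simp [Fin.cons_self_tail]
  · intro x hx
    refine Sigma.ext ?_ ?_
    · simp only [Fin.cons_zero, Fin.cons_succ, Prod.mk.injEq]
      rw [Finset.mem_sigma, Finset.HasAntidiagonal.mem_antidiagonal, Finset.Nat.mem_antidiagonalTuple] at hx
      exact Prod.ext rfl hx.2
    · simp [Fin.tail_cons]
  · intro k hk
    simp [Fin.cons_self_tail]

private theorem dtd_mul (f g : ℝ → ℝ) (hf : ContDiff ℝ (⊤ : ℕ∞) f) (hg : ContDiff ℝ (⊤ : ℕ∞) g)
    (n : ℕ) (x : ℝ) :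
    iteratedDeriv n (fun t => f t * g t) x / n.factorial
      = ∑ pq ∈ antidiagonal n, (iteratedDeriv pq.1 f x / pq.1.factorial)
          * (iteratedDeriv pq.2 g x / pq.2.factorial) := by
  rw [itd_mul f g hf hg n x, sum_div]
  refine sum_congr rfl ?_
  intro pq hpq
  rw [Finset.HasAntidiagonal.mem_antidiagonal] at hpq
  have h1 : pq.1 ≤ n := le_of_add_le_left hpq.le
  have hfact : (n.choose pq.1 : ℝ) * pq.1.factorial * pq.2.factorial = n.factorial := by
    rw [show pq.2 = n - pq.1 by omega]
    exact_mod_cast congrArg (Nat.cast : ℕ → ℝ) (Nat.choose_mul_factorial_mul_factorial h1)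
  have h2 : (pq.1.factorial : ℝ) ≠ 0 := Nat.cast_ne_zero.2 (Nat.factorial_ne_zero _)
  have h3 : (pq.2.factorial : ℝ) ≠ 0 := Nat.cast_ne_zero.2 (Nat.factorial_ne_zero _)
  have h4 : (n.factorial : ℝ) ≠ 0 := Nat.cast_ne_zero.2 (Nat.factorial_ne_zero _)
  field_simp
  linear_combination iteratedDeriv pq.1 f x * iteratedDeriv pq.2 g x * hfact

private theorem dtd_prod : ∀ (J : ℕ) (u : Fin J → ℝ → ℝ), (∀ j, ContDiff ℝ (⊤ : ℕ∞) (u j)) →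
    ∀ (n : ℕ) (x : ℝ),
    iteratedDeriv n (fun t => ∏ j, u j t) x / n.factorial
      = ∑ k ∈ Finset.Nat.antidiagonalTuple J n,
          ∏ j, iteratedDeriv (k j) (u j) x / (k j).factorial := by
  intro J
  induction J with
  | zero =>
    intro u hu n x
    have h1 : (fun t => ∏ j : Fin 0, u j t) = fun _ => (1:ℝ) := funext fun t => by simp
    rw [h1]
    cases n with
    | zero => simp
    | succ n =>
      rw [Finset.Nat.antidiagonalTuple_zero_succ]
      have hconst : ∀ (m : ℕ) (c : ℝ) (y : ℝ),
          iteratedDeriv m (fun _ : ℝ => c) y = if m = 0 then c else 0 := by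
        intro m
        induction m with
        | zero => intro c y; simp
        | succ m ihm =>
          intro c y
          rw [iteratedDeriv_succ', deriv_const']
          rw [ihm 0 y]
          simp
      rw [hconst (n+1) 1 x]
      simp
  | succ J ih =>
    intro u hu n x
    have h1 : (fun t => ∏ j : Fin (J+1), u j t) = fun t => u 0 t * ∏ j : Fin J, u j.succ t :=
      funext fun t => Fin.prod_univ_succ _
    have htail : ContDiff ℝ (⊤ : ℕ∞) (fun t => ∏ j : Fin J, u j.succ t) :=
      contDiff_prod (fun j _ => hu j.succ)
    rw [h1, dtd_mul (u 0) _ (hu 0) htail n x, sum_adt_succ]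
    refine sum_congr rfl ?_
    intro pq hpq
    rw [ih (fun j => u j.succ) (fun j => hu j.succ) pq.2 x, mul_sum]
    refine sum_congr rfl ?_
    intro k hk
    rw [Fin.prod_univ_succ]
    simp [Fin.cons_zero, Fin.cons_succ]

private noncomputable def convC (J : ℕ) (aa : Fin J → ℕ → ℝ) (l : ℕ) : ℝ :=
  ∑ k ∈ Finset.Nat.antidiagonalTuple J l, ∏ j, aa j (k j)

private theorem card_adt_le (J l : ℕ) :
    ((Finset.Nat.antidiagonalTuple J l).card : ℝ) ≤ (l+1)^J := by
  have hsub : Finset.Nat.antidiagonalTuple J l ⊆ Fintype.piFinset (fun _ : Fin J => range (l+1)) := by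
    intro k hk
    rw [Finset.Nat.mem_antidiagonalTuple] at hk
    refine Fintype.mem_piFinset.2 ?_
    intro j
    rw [mem_range, Nat.lt_succ_iff, ← hk]
    exact single_le_sum (f := k) (fun i _ => Nat.zero_le _) (mem_univ j)
  have := Finset.card_le_card hsub
  rw [Fintype.card_piFinset] at this
  simp only [card_range, prod_const, card_univ, Fintype.card_fin] at this
  exact_mod_cast this

private theorem conv_decomp (J : ℕ) (aa : Fin J → ℕ → ℝ) (j₀ : Fin J) (l : ℕ) :
    convC J aa (l+1)
      = (∑ k ∈ (Finset.Nat.antidiagonalTuple J (l+1)).filter (fun k => k j₀ = 0), ∏ j, aa j (k j))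
        + convC J (Function.update aa j₀ (fun i => aa j₀ (i+1))) l := by
  rw [convC, ← Finset.sum_filter_add_sum_filter_not _ (fun k => k j₀ = 0)]
  congr 1
  rw [convC]
  refine Finset.sum_nbij' (i := fun (k : Fin J → ℕ) => Function.update k j₀ (k j₀ - 1))
    (j := fun (k : Fin J → ℕ) => Function.update k j₀ (k j₀ + 1)) ?_ ?_ ?_ ?_ ?_
  · intro k hk
    rw [Finset.mem_filter, Finset.Nat.mem_antidiagonalTuple] at hk
    rw [Finset.Nat.mem_antidiagonalTuple]
    rw [Finset.sum_update_of_mem (mem_univ j₀), Finset.sdiff_singleton_eq_erase]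
    have h2 := Finset.add_sum_erase univ k (mem_univ j₀)
    omega
  · intro k hk
    rw [Finset.Nat.mem_antidiagonalTuple] at hk
    rw [Finset.mem_filter, Finset.Nat.mem_antidiagonalTuple]
    constructor
    · rw [Finset.sum_update_of_mem (mem_univ j₀), Finset.sdiff_singleton_eq_erase]
      have h2 := Finset.add_sum_erase univ k (mem_univ j₀)
      omega
    · simp
  · intro k hk
    rw [Finset.mem_filter, Finset.Nat.mem_antidiagonalTuple] at hk
    have h1 : k j₀ ≠ 0 := hk.2
    funext j
    by_cases hj : j = j₀
    · subst hj
      simp only [Function.update_self]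
      omega
    · simp only [Function.update_of_ne hj]
  · intro k hk
    funext j
    by_cases hj : j = j₀
    · subst hj; simp
    · simp only [Function.update_of_ne hj]
  · intro k hk
    rw [Finset.mem_filter, Finset.Nat.mem_antidiagonalTuple] at hk
    refine Finset.prod_congr rfl ?_
    intro j _
    by_cases hj : j = j₀
    · subst hj
      simp only [Function.update_self]
      congr 1
      omega
    · simp [Function.update_of_ne hj]

private noncomputable def tseq (J : ℕ) (σ β' : ℝ) : ℕ → ℝ
  | 0 => β' / σ
  | n+1 => tseq J σ β' n ^ J / σ

section tseqprops
variable {J : ℕ} {σ β' : ℝ} (hJ : 0 < J) (hβ0 : 0 < β') (hβ1 : β' ≤ 1) (hσ : 4 ≤ σ)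
include hβ0 hσ

private theorem tseq_pos (hJ : 0 < J) : ∀ n, 0 < tseq J σ β' n := by
  intro n
  induction n with
  | zero => rw [tseq]; exact div_pos hβ0 (by linarith)
  | succ n ihn => rw [tseq]; exact div_pos (pow_pos ihn J) (by linarith)

include hβ1 in
private theorem tseq_le_beta (hJ : 0 < J) : ∀ n, tseq J σ β' n ≤ β' := by
  intro n
  have hσ1 : (1:ℝ) ≤ σ := by linarith
  induction n with
  | zero => rw [tseq]; exact div_le_self hβ0.le hσ1
  | succ n ihn =>
    have h1 : tseq J σ β' n ^ J ≤ tseq J σ β' n := by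
      refine pow_le_of_le_one (tseq_pos hβ0 hσ hJ n).le ?_ hJ.ne'
      exact ihn.trans hβ1
    calc tseq J σ β' (n+1) = tseq J σ β' n ^ J / σ := by rw [tseq]
    _ ≤ tseq J σ β' n / σ := by gcongr
    _ ≤ tseq J σ β' n := div_le_self (tseq_pos hβ0 hσ hJ n).le hσ1
    _ ≤ β' := ihn

include hβ1 in
private theorem tseq_le_one (hJ : 0 < J) : ∀ n, tseq J σ β' n ≤ 1 :=
  fun n => (tseq_le_beta hβ0 hβ1 hσ hJ n).trans hβ1

private theorem tseq_lower (hJ2 : 2 ≤ J) : ∀ n, σ * (β' / σ^2) ^ (J^n) ≤ tseq J σ β' n := by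
  intro n
  have hσ0 : (0:ℝ) < σ := by linarith
  have hbase : 0 ≤ β' / σ^2 := by positivity
  induction n with
  | zero =>
    rw [pow_zero, pow_one, tseq]
    rw [show σ * (β' / σ^2) = β' / σ by field_simp]
  | succ n ihn =>
    have h1 : (σ * (β' / σ^2) ^ (J^n)) ^ J ≤ tseq J σ β' n ^ J :=
      pow_le_pow_left₀ (by positivity) ihn J
    calc σ * (β' / σ^2) ^ (J^(n+1)) = σ * ((β' / σ^2) ^ (J^n)) ^ J := by
          rw [show J^(n+1) = J^n * J from pow_succ J n, pow_mul]
    _ ≤ σ^(J-1) * ((β' / σ^2) ^ (J^n)) ^ J := by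
          refine mul_le_mul_of_nonneg_right ?_ (by positivity)
          calc σ = σ^1 := (pow_one σ).symm
          _ ≤ σ^(J-1) := pow_le_pow_right₀ (by linarith) (by omega)
    _ = (σ * (β' / σ^2) ^ (J^n)) ^ J / σ := by
          rw [mul_pow, ← pow_sub_one_mul (by omega : J ≠ 0) σ]
          field_simp
    _ ≤ tseq J σ β' n ^ J / σ := by gcongr
    _ = tseq J σ β' (n+1) := by rw [tseq]
end tseqprops

private theorem key (J : ℕ) (hJ : 0 < J) (β' σ : ℝ) (hβ0 : 0 < β') (hβ1 : β' ≤ 1)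
    (hσ : 4 ≤ σ) (N : ℕ) (hcard : ((N:ℝ)+1)^J ≤ σ/4) :
    ∀ n, n ≤ N → ∀ (m : Fin J → ℕ) (aa : Fin J → ℕ → ℝ),
      (∑ j, m j) = n →
      (∀ j i, i ≤ n → |aa j i| ≤ 1) →
      (∀ j, ∃ i, i ≤ m j ∧ β' ≤ |aa j i|) →
      ∃ l, l ≤ n ∧ tseq J σ β' n ^ J / 2 ≤ |convC J aa l| := by
  intro n
  induction n using Nat.strong_induction_on with
  | _ n ih =>
  intro hnN m aa hsum hbd hwit
  have htpos := tseq_pos hβ0 hσ hJ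
  have htone := tseq_le_one hβ0 hβ1 hσ hJ
  have htbeta := tseq_le_beta hβ0 hβ1 hσ hJ
  by_cases hcase : ∀ j, tseq J σ β' n ≤ |aa j 0|
  · refine ⟨0, Nat.zero_le _, ?_⟩
    have h0 : convC J aa 0 = ∏ j, aa j 0 := by
      rw [convC, Finset.Nat.antidiagonalTuple_zero_right, sum_singleton]
      rfl
    rw [h0, abs_prod]
    have h1 : tseq J σ β' n ^ J ≤ ∏ j : Fin J, |aa j 0| := by
      calc tseq J σ β' n ^ J = ∏ _j : Fin J, tseq J σ β' n := by
            rw [prod_const, card_univ, Fintype.card_fin]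
      _ ≤ ∏ j : Fin J, |aa j 0| :=
            prod_le_prod (fun j _ => (htpos n).le) (fun j _ => hcase j)
    calc tseq J σ β' n ^ J / 2 ≤ tseq J σ β' n ^ J := by
          exact div_le_self (pow_nonneg (htpos n).le J) one_le_two
    _ ≤ _ := h1
  · push_neg at hcase
    obtain ⟨j₀, hj₀⟩ := hcase
    obtain ⟨i₀, hi₀m, hi₀β⟩ := hwit j₀
    have hi₀pos : 0 < i₀ := by
      rcases Nat.eq_zero_or_pos i₀ with h | h
      · exfalso; rw [h] at hi₀β; exact absurd hi₀β (not_le.2 (lt_of_lt_of_le hj₀ (htbeta n)))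
      · exact h
    have hmj₀ : 1 ≤ m j₀ := le_trans hi₀pos hi₀m
    have hn1 : 1 ≤ n := by
      rw [← hsum]
      exact le_trans hmj₀ (single_le_sum (f := m) (fun i _ => Nat.zero_le _) (mem_univ j₀))
    set aa' := Function.update aa j₀ (fun i => aa j₀ (i+1)) with haa'
    set m' := Function.update m j₀ (m j₀ - 1) with hm'
    have hsum' : (∑ j, m' j) = n - 1 := by
      rw [hm', Finset.sum_update_of_mem (mem_univ j₀), Finset.sdiff_singleton_eq_erase]
      have h2 := Finset.add_sum_erase univ m (mem_univ j₀)
      omega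
    have hbd' : ∀ j i, i ≤ n - 1 → |aa' j i| ≤ 1 := by
      intro j i hi
      by_cases hj : j = j₀
      · subst hj; rw [haa', Function.update_self]; exact hbd j (i+1) (by omega)
      · rw [haa', Function.update_of_ne hj]; exact hbd j i (by omega)
    have hwit' : ∀ j, ∃ i, i ≤ m' j ∧ β' ≤ |aa' j i| := by
      intro j
      by_cases hj : j = j₀
      · subst hj
        refine ⟨i₀ - 1, by rw [hm', Function.update_self]; omega, ?_⟩
        rw [haa', Function.update_self]
        have : i₀ - 1 + 1 = i₀ := by omega
        rw [this]
        exact hi₀β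
      · exact ⟨(hwit j).choose, by rw [hm', Function.update_of_ne hj]; exact (hwit j).choose_spec.1,
          by rw [haa', Function.update_of_ne hj]; exact (hwit j).choose_spec.2⟩
    obtain ⟨l', hl', hlb⟩ := ih (n-1) (by omega) (by omega) m' aa' hsum' hbd' hwit'
    refine ⟨l'+1, by omega, ?_⟩
    have hdec := conv_decomp J aa j₀ l'
    -- bound the filtered sum
    set S := ∑ k ∈ (Finset.Nat.antidiagonalTuple J (l'+1)).filter (fun k => k j₀ = 0),
        ∏ j, aa j (k j) with hS
    have hterm : ∀ k ∈ (Finset.Nat.antidiagonalTuple J (l'+1)).filter (fun k => k j₀ = 0),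
        |∏ j, aa j (k j)| ≤ tseq J σ β' n := by
      intro k hk
      rw [Finset.mem_filter, Finset.Nat.mem_antidiagonalTuple] at hk
      have hkle : ∀ j, k j ≤ n := by
        intro j
        have := single_le_sum (f := k) (fun i _ => Nat.zero_le _) (mem_univ j)
        omega
      rw [abs_prod, ← Finset.mul_prod_erase univ _ (mem_univ j₀)]
      have h1 : |aa j₀ (k j₀)| ≤ tseq J σ β' n := by
        rw [hk.2]; exact hj₀.le
      have h2 : ∏ j ∈ univ.erase j₀, |aa j (k j)| ≤ 1 :=
        prod_le_one (fun j _ => abs_nonneg _) (fun j _ => hbd j (k j) (hkle j))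
      calc |aa j₀ (k j₀)| * ∏ j ∈ univ.erase j₀, |aa j (k j)|
          ≤ tseq J σ β' n * 1 := mul_le_mul h1 h2 (prod_nonneg fun j _ => abs_nonneg _)
            (htpos n).le
      _ = tseq J σ β' n := mul_one _
    have hScard : |S| ≤ σ/4 * tseq J σ β' n := by
      calc |S| ≤ ∑ k ∈ (Finset.Nat.antidiagonalTuple J (l'+1)).filter (fun k => k j₀ = 0),
            |∏ j, aa j (k j)| := abs_sum_le_sum_abs _ _
      _ ≤ ∑ _k ∈ (Finset.Nat.antidiagonalTuple J (l'+1)).filter (fun k => k j₀ = 0),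
            tseq J σ β' n := sum_le_sum hterm
      _ = ((Finset.Nat.antidiagonalTuple J (l'+1)).filter (fun k => k j₀ = 0)).card
            * tseq J σ β' n := by rw [sum_const, nsmul_eq_mul]
      _ ≤ σ/4 * tseq J σ β' n := by
            refine mul_le_mul_of_nonneg_right ?_ (htpos n).le
            calc (((Finset.Nat.antidiagonalTuple J (l'+1)).filter (fun k => k j₀ = 0)).card : ℝ)
                ≤ ((Finset.Nat.antidiagonalTuple J (l'+1)).card : ℝ) := by
                  exact_mod_cast Finset.card_le_card (Finset.filter_subset _ _)
            _ ≤ ((l'+1:ℕ)+1:ℝ)^J := card_adt_le J (l'+1)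
            _ ≤ ((N:ℝ)+1)^J := by
                  refine pow_le_pow_left₀ (by positivity) ?_ J
                  have : l' + 2 ≤ N + 1 := by omega
                  exact_mod_cast this
            _ ≤ σ/4 := hcard
    -- recursion identity for tseq at n
    have hnrec : tseq J σ β' n = tseq J σ β' (n-1) ^ J / σ := by
      conv_lhs => rw [show n = (n-1)+1 by omega]
      rw [tseq]
    have hmain : tseq J σ β' (n-1) ^ J / 4 ≤ |convC J aa (l'+1)| := by
      have h5 : |convC J aa (l'+1)| ≥ |convC J aa' l'| - |S| := by
        rw [hdec]
        have := abs_sub_abs_le_abs_sub (convC J aa' l') (-S)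
        rw [abs_neg, sub_neg_eq_add, add_comm] at this
        linarith [this]
      have h6 : σ/4 * tseq J σ β' n = tseq J σ β' (n-1) ^ J / 4 := by
        rw [hnrec]; field_simp
      have h7 : tseq J σ β' (n-1) ^ J / 2 ≤ |convC J aa' l'| := hlb
      linarith [h5, hScard, h6.symm.le]
    refine le_trans ?_ hmain
    -- t n ^ J / 2 ≤ t (n-1) ^ J / 4
    have h8 : tseq J σ β' n ^ J ≤ tseq J σ β' n := by
      refine pow_le_of_le_one (htpos n).le (htone n) hJ.ne'
    have h9 : tseq J σ β' n ≤ tseq J σ β' (n-1) ^ J / 4 * (4/σ) := by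
      rw [hnrec]
      rw [show tseq J σ β' (n-1) ^ J / 4 * (4/σ) = tseq J σ β' (n-1)^J/σ by field_simp]
    have h10 : (4:ℝ)/σ ≤ 1 := by
      rw [div_le_one (by linarith)]; exact hσ
    have hpow : 0 ≤ tseq J σ β' (n-1) ^ J / 4 := div_nonneg (pow_nonneg (htpos _).le _) (by norm_num)
    nlinarith [h8, h9, h10, hpow, (htpos n).le]

private theorem hnat_ineq (J N : ℕ) (hJ2 : 2 ≤ J) (hNJ : J ≤ N) :
    N*(N+2*J+4) * J^(N+1) ≤ J^(8*N) := by
  have hN2 : 2 ≤ N := le_trans hJ2 hNJ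
  have h1 : N*(N+2*J+4) ≤ 7*N^2 := by nlinarith
  have h2 : N^2 ≤ 2^(2*N) := by
    have := @Nat.lt_two_pow_self N
    calc N^2 ≤ (2^N)^2 := Nat.pow_le_pow_left this.le 2
    _ = 2^(2*N) := by rw [← pow_mul, Nat.mul_comm]
  have h3 : 7*N^2 ≤ 2^(2*N+3) := by
    calc 7*N^2 ≤ 8*N^2 := by nlinarith
    _ ≤ 8*2^(2*N) := by nlinarith
    _ = 2^(2*N+3) := by rw [pow_add]; ring
  have h4 : (2:ℕ)^(2*N+3) ≤ 2^(7*N-1) := Nat.pow_le_pow_right (by norm_num) (by omega)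
  have h5 : (2:ℕ)^(7*N-1) ≤ J^(7*N-1) := Nat.pow_le_pow_left hJ2 _
  calc N*(N+2*J+4) * J^(N+1) ≤ J^(7*N-1) * J^(N+1) := by
        refine Nat.mul_le_mul_right _ (le_trans h1 (le_trans h3 (le_trans h4 h5)))
  _ = J^(8*N) := by rw [← pow_add]; congr 1; omega

/-- Eliasson's lemma on transversality of products: if `u₁,…,u_J` are smooth on the open
interval `I = (a,b)` with all derivatives of order `≤ N := m₁+⋯+m_J` bounded by `C₁ ≥ 1`,
and at every point of `I` each `u_j` has some derivative of order `≤ m_j` of size `≥ β`,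
then the product `u = u₁⋯u_J` satisfies
`max_{0≤l≤N} |u^{(l)}(θ)| ≥ (1/e)^{J^{8N}} (β/C₁²)^{J^{N+1}}` on `I`. -/
theorem eliasson_product_transversality (J : ℕ) (hJ : 0 < J) (a b : ℝ)
    (u : Fin J → ℝ → ℝ) (hu : ∀ j, ContDiff ℝ (⊤ : ℕ∞) (u j))
    (m : Fin J → ℕ) (hm : ∀ j, 0 < m j) (N : ℕ) (hN : N = ∑ j, m j)
    (C₁ β : ℝ) (hC : 1 ≤ C₁) (hβ : 0 < β)
    (hupper : ∀ j, ∀ l ≤ N, ∀ θ ∈ Set.Ioo a b, |iteratedDeriv l (u j) θ| ≤ C₁)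
    (hlower : ∀ θ ∈ Set.Ioo a b, ∀ j, ∃ l ≤ m j, β ≤ |iteratedDeriv l (u j) θ|) :
    ∀ θ ∈ Set.Ioo a b, ∃ l ≤ N,
      (1 / Real.exp 1) ^ (J ^ (8 * N)) * (β / C₁ ^ 2) ^ (J ^ (N + 1))
        ≤ |iteratedDeriv l (fun t => ∏ j, u j t) θ| := by
  intro θ hθ
  have hC0 : (0:ℝ) < C₁ := by linarith
  have hmN : ∀ j, m j ≤ N := fun j => hN ▸ single_le_sum (f := m) (fun i _ => Nat.zero_le _) (mem_univ j)
  have hβC : β ≤ C₁ := by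
    obtain ⟨l, hl, hb⟩ := hlower θ hθ ⟨0, hJ⟩
    exact hb.trans (hupper _ l (le_trans hl (hmN _)) θ hθ)
  rcases lt_or_ge J 2 with hJ1 | hJ2
  · -- J = 1
    have hJe : J = 1 := by omega
    subst hJe
    obtain ⟨l, hl, hb⟩ := hlower θ hθ 0
    have hlN : l ≤ N := le_trans hl (hmN 0)
    refine ⟨l, hlN, ?_⟩
    have hprod : (fun t => ∏ j : Fin 1, u j t) = u 0 := funext fun t => Fin.prod_univ_one _
    rw [hprod]
    refine le_trans ?_ hb
    rw [one_pow, one_pow, pow_one, pow_one]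
    have he : 1 ≤ Real.exp 1 := Real.one_le_exp (by norm_num)
    have h2 : 1/Real.exp 1 ≤ 1 := by
      rw [div_le_one (by positivity)]; exact he
    have h3 : β / C₁^2 ≤ β := by
      apply div_le_self hβ.le; nlinarith
    calc (1/Real.exp 1) * (β/C₁^2) ≤ 1 * (β/C₁^2) :=
          mul_le_mul_of_nonneg_right h2 (by positivity)
    _ = β/C₁^2 := one_mul _
    _ ≤ β := h3
  · -- J ≥ 2
    have hNJ : J ≤ N := by
      rw [hN]
      calc J = ∑ _j : Fin J, 1 := by simp
      _ ≤ ∑ j, m j := sum_le_sum (fun j _ => hm j)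
    have hN2 : 2 ≤ N := le_trans hJ2 hNJ
    set σ : ℝ := 4*((N:ℝ)+1)^J with hσdef
    set β' : ℝ := β / (N.factorial * C₁) with hβ'def
    have hfac1 : (1:ℝ) ≤ N.factorial := by exact_mod_cast (Nat.factorial_pos N)
    have hβ'0 : 0 < β' := div_pos hβ (by positivity)
    have hβ'1 : β' ≤ 1 := by
      rw [hβ'def, div_le_one (by positivity)]
      nlinarith
    have hNp1 : (1:ℝ) ≤ ((N:ℝ)+1)^J := by
      calc (1:ℝ) = 1^J := (one_pow J).symm
      _ ≤ ((N:ℝ)+1)^J := pow_le_pow_left₀ one_pos.le (by have := Nat.cast_nonneg (α:=ℝ) N; linarith) J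
    have hσ4 : 4 ≤ σ := by rw [hσdef]; nlinarith
    have hcard : ((N:ℝ)+1)^J ≤ σ/4 := by rw [hσdef]; ring_nf; nlinarith
    set aa : Fin J → ℕ → ℝ := fun j i => iteratedDeriv i (u j) θ / (i.factorial * C₁) with haadef
    have hbd : ∀ j i, i ≤ N → |aa j i| ≤ 1 := by
      intro j i hi
      have hif : (1:ℝ) ≤ i.factorial := by exact_mod_cast (Nat.factorial_pos i)
      rw [haadef]
      simp only
      rw [abs_div, abs_of_pos (show (0:ℝ) < i.factorial * C₁ by positivity),
        div_le_one (by positivity)]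
      calc |iteratedDeriv i (u j) θ| ≤ C₁ := hupper j i hi θ hθ
      _ ≤ i.factorial * C₁ := by nlinarith
    have hwit : ∀ j, ∃ i, i ≤ m j ∧ β' ≤ |aa j i| := by
      intro j
      obtain ⟨i, him, hib⟩ := hlower θ hθ j
      refine ⟨i, him, ?_⟩
      have hif : (1:ℝ) ≤ i.factorial := by exact_mod_cast (Nat.factorial_pos i)
      rw [haadef]
      simp only
      rw [abs_div, abs_of_pos (show (0:ℝ) < i.factorial * C₁ by positivity), hβ'def,
        div_le_div_iff₀ (by positivity) (by positivity)]
      have hfle : (i.factorial:ℝ) ≤ N.factorial := by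
        exact_mod_cast Nat.factorial_le (le_trans him (hmN j))
      have habs0 : (0:ℝ) ≤ |iteratedDeriv i (u j) θ| := abs_nonneg _
      nlinarith [mul_le_mul_of_nonneg_left hfle hβ.le,
        mul_le_mul_of_nonneg_right hib (mul_nonneg (le_trans zero_le_one hfac1) hC0.le)]
    obtain ⟨l, hlN, hkey⟩ := key J (by omega) β' σ hβ'0 hβ'1 hσ4 N hcard N le_rfl m aa hN.symm hbd hwit
    refine ⟨l, hlN, ?_⟩
    have hlf1 : (1:ℝ) ≤ l.factorial := by exact_mod_cast (Nat.factorial_pos l)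
    have hconv : convC J aa l
        = (iteratedDeriv l (fun t => ∏ j, u j t) θ / l.factorial) * (C₁⁻¹)^J := by
      rw [convC]
      calc ∑ k ∈ Finset.Nat.antidiagonalTuple J l, ∏ j, aa j (k j)
          = ∑ k ∈ Finset.Nat.antidiagonalTuple J l,
              (∏ j, iteratedDeriv (k j) (u j) θ / (k j).factorial) * (C₁⁻¹)^J := by
            refine sum_congr rfl ?_
            intro k _
            rw [show (C₁⁻¹^J : ℝ) = ∏ _j : Fin J, C₁⁻¹ by
              rw [prod_const, card_univ, Fintype.card_fin], ← prod_mul_distrib]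
            refine prod_congr rfl ?_
            intro j _
            rw [haadef]
            simp only [div_mul_eq_div_div, div_eq_mul_inv]
            rw [mul_inv]
            ring
      _ = (∑ k ∈ Finset.Nat.antidiagonalTuple J l,
              ∏ j, iteratedDeriv (k j) (u j) θ / (k j).factorial) * (C₁⁻¹)^J := by
            rw [sum_mul]
      _ = (iteratedDeriv l (fun t => ∏ j, u j t) θ / l.factorial) * (C₁⁻¹)^J := by
            rw [← dtd_prod J u hu l θ]
    have habs : |convC J aa l| ≤ |iteratedDeriv l (fun t => ∏ j, u j t) θ| := by
      set X := iteratedDeriv l (fun t => ∏ j, u j t) θ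
      rw [hconv, abs_mul, abs_div, abs_pow, abs_inv, abs_of_pos hC0,
        abs_of_pos (show (0:ℝ) < (l.factorial:ℝ) by positivity)]
      have h1 : |X| / l.factorial ≤ |X| := div_le_self (abs_nonneg _) hlf1
      have h2 : (C₁⁻¹)^J ≤ 1 := by
        refine pow_le_one₀ (by positivity) ?_
        rw [inv_le_one_iff₀]; right; exact hC
      calc |X|/l.factorial * (C₁⁻¹)^J ≤ |X| * 1 :=
            mul_le_mul h1 h2 (by positivity) (abs_nonneg _)
      _ = |X| := mul_one _
    refine le_trans ?_ (le_trans hkey habs)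
    -- target ≤ tseq N ^ J / 2
    set E := J ^ (8*N)
    set P := J ^ (N+1)
    set A : ℝ := (N.factorial : ℝ) * σ^2 with hAdef
    have hσ0 : (0:ℝ) ≤ σ := by linarith
    have hσ16 : (16:ℝ) ≤ σ^2 := by
      calc (16:ℝ) = 4*4 := by norm_num
      _ ≤ σ*σ := mul_le_mul hσ4 hσ4 (by norm_num) hσ0
      _ = σ^2 := (sq σ).symm
    have hA1 : (1:ℝ) ≤ A := by
      rw [hAdef]
      calc (1:ℝ) = 1*1 := by norm_num
      _ ≤ (N.factorial:ℝ) * σ^2 := mul_le_mul hfac1 (by linarith) (by norm_num) (by linarith)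
    have hbase : β'/σ^2 = (β/C₁^2) * (C₁/A) := by
      rw [hβ'def, hAdef]
      field_simp
    have hAbound : A ^ P ≤ Real.exp E := by
      have hNfle : (N.factorial : ℝ) ≤ ((N:ℝ)+1)^N := by
        calc (N.factorial : ℝ) ≤ (N:ℝ)^N := by exact_mod_cast Nat.factorial_le_pow N
        _ ≤ ((N:ℝ)+1)^N := pow_le_pow_left₀ (Nat.cast_nonneg N) (by linarith) N
      have h16 : (16:ℝ) ≤ ((N:ℝ)+1)^4 := by
        have hN3 : (3:ℝ) ≤ (N:ℝ)+1 := by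
          have : (2:ℝ) ≤ (N:ℝ) := by exact_mod_cast hN2
          linarith
        calc (16:ℝ) ≤ 3^4 := by norm_num
        _ ≤ ((N:ℝ)+1)^4 := pow_le_pow_left₀ (by norm_num) hN3 4
      have hAle : A ≤ ((N:ℝ)+1)^(N+2*J+4) := by
        have hσ2 : σ^2 = 16 * (((N:ℝ)+1)^J)^2 := by rw [hσdef]; ring
        calc A = (N.factorial : ℝ) * σ^2 := hAdef
        _ ≤ ((N:ℝ)+1)^N * (16 * (((N:ℝ)+1)^J)^2) := by
              rw [hσ2]
              refine mul_le_mul hNfle le_rfl (by positivity) (by positivity)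
        _ ≤ ((N:ℝ)+1)^N * (((N:ℝ)+1)^4 * (((N:ℝ)+1)^J)^2) := by
              refine mul_le_mul_of_nonneg_left ?_ (by positivity)
              refine mul_le_mul_of_nonneg_right h16 (by positivity)
        _ = ((N:ℝ)+1)^(N+2*J+4) := by
              rw [← pow_mul, ← pow_add, ← pow_add]
              congr 1
              ring
      have hexp : ((N:ℝ)+1)^(N+2*J+4) ≤ Real.exp (N*(N+2*J+4)) := by
        calc ((N:ℝ)+1)^(N+2*J+4) ≤ (Real.exp N)^(N+2*J+4) := by
              refine pow_le_pow_left₀ (by positivity) ?_ _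
              have := Real.add_one_le_exp (N:ℝ)
              linarith
        _ = Real.exp (N*(N+2*J+4)) := by
              rw [← Real.exp_nat_mul]
              congr 1
              push_cast
              ring
      calc A ^ P ≤ (Real.exp (N*(N+2*J+4))) ^ P := by
            refine pow_le_pow_left₀ (by positivity) (hAle.trans hexp) P
      _ = Real.exp ((N*(N+2*J+4)) * P) := by
            rw [← Real.exp_nat_mul]
            congr 1
            push_cast
            ring
      _ ≤ Real.exp E := by
            refine Real.exp_le_exp.2 ?_
            have := hnat_ineq J N hJ2 hNJ
            exact_mod_cast this
    have hfinal : (1 / Real.exp 1) ^ E * (β / C₁ ^ 2) ^ P ≤ (β'/σ^2) ^ P := by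
      rw [hbase, mul_pow, mul_comm ((β / C₁ ^ 2) ^ P)]
      refine mul_le_mul_of_nonneg_right ?_ (pow_nonneg (div_nonneg hβ.le (pow_nonneg hC0.le 2)) P)
      have h1 : (1/Real.exp 1) ^ E = (Real.exp E)⁻¹ := by
        rw [one_div, inv_pow, Real.exp_one_pow]
      have h2 : ((1:ℝ)/A) ^ P ≤ (C₁/A) ^ P := by
        refine pow_le_pow_left₀ (by positivity) ?_ P
        exact (div_le_div_iff_of_pos_right (lt_of_lt_of_le one_pos hA1)).2 hC
      have h3 : (Real.exp E)⁻¹ ≤ ((1:ℝ)/A) ^ P := by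
        rw [div_pow, one_pow, one_div]
        gcongr
      rw [h1]
      exact h3.trans h2
    refine hfinal.trans ?_
    -- (β'/σ²)^P ≤ tseq^J/2
    have hlow := tseq_lower hβ'0 hσ4 hJ2 N
    have h4 : (σ * (β'/σ^2)^(J^N))^J ≤ tseq J σ β' N ^ J :=
      pow_le_pow_left₀ (by positivity) hlow J
    have h5 : (σ * (β'/σ^2)^(J^N))^J = σ^J * (β'/σ^2)^P := by
      rw [mul_pow, ← pow_mul, ← pow_succ]
    have h6 : (2:ℝ) ≤ σ^J := by
      calc (2:ℝ) ≤ σ := by linarith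
      _ = σ^1 := (pow_one σ).symm
      _ ≤ σ^J := pow_le_pow_right₀ (by linarith) (by omega)
    have h7 : (0:ℝ) ≤ (β'/σ^2)^P := by positivity
    have h8 : 2 * (β'/σ^2)^P ≤ σ^J * (β'/σ^2)^P := mul_le_mul_of_nonneg_right h6 h7
    rw [h5] at h4
    linarith [h4, h8]
end

section
/- Let L, K be positive integers and let S ⊂ ℤ^d satisfy |S ∩ (Q_{4LK} + x)| ≤ K for all x ∈ ℤ^d, where Q_R = {x ∈ ℤ^d : ‖x‖₁ ≤ R}. Then for any finite set Λ ⊂ ℤ^d there exists an extension Λ̃ with Λ ⊂ Λ̃ ⊂ {x : dist₁(x, Λ) ≤ 2KL}, and such that for every x ∈ S with (Q_L + x) ∩ Λ̃ ≠ ∅ one has (Q_L + x) ⊂ Λ̃. -/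
/-!
Call a list of distinct points of `S` anchored if consecutive points are at most `2r` apart and
its last point lies within `r` of `Λ`. Take for `Λ̃` the set `Λ` together with the `r`-balls
around heads of anchored chains. If the `r`-ball around `x ∈ S` meets `Λ̃`, then `x` is within
`r` of `Λ` or within `2r` of the head of an anchored chain; either way `x` heads an anchored chain
(prepend `x`, or cut the chain at `x` if it already occurs). Any `K + 1` consecutive points of a
chain lie in the `2rK`-ball around the first one, so the density hypothesis caps anchored chains at
`K` points, and a point of `Λ̃` is within `r + 2r(K - 1) + r = 2Kr` of `Λ`.
-/

open Metric

section Saturation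

variable {α : Type*} [PseudoMetricSpace α]

theorem List.IsChain.dist_head_le {c : ℝ} (hc : 0 ≤ c) {x : α} {t : List α}
    (h : (x :: t).IsChain fun a b => dist a b ≤ c) {a : α} (ha : a ∈ x :: t) :
    dist x a ≤ c * t.length := by
  induction t generalizing x with
  | nil => simp_all
  | cons y t ih =>
    rw [List.isChain_cons_cons] at h
    rcases List.mem_cons.mp ha with rfl | ha
    · rw [dist_self]; positivity
    · calc dist x a ≤ dist x y + dist y a := dist_triangle _ _ _
        _ ≤ c + c * t.length := add_le_add h.1 (ih h.2 ha)
        _ = c * (y :: t).length := by simp only [List.length_cons]; push_cast; ring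

theorem List.length_le_of_isChain_dist_le {c : ℝ} (hc : 0 ≤ c) {K : ℕ} {S : Set α}
    (hS : ∀ x, (S ∩ closedBall x (c * K)).encard ≤ K) {l : List α}
    (hlS : ∀ a ∈ l, a ∈ S) (hnd : l.Nodup) (h : l.IsChain fun a b => dist a b ≤ c) :
    l.length ≤ K := by
  classical
  by_contra! hlen
  have hpre : l.take (K + 1) <+: l := List.take_prefix _ _
  obtain ⟨x, t, hxt⟩ := List.exists_cons_of_ne_nil (l := l.take (K + 1))
    (List.ne_nil_of_length_pos (by simp only [List.length_take]; omega))
  have ht : t.length = K := by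
    have := congrArg List.length hxt
    simp only [List.length_take, List.length_cons] at this
    omega
  rw [hxt] at hpre
  have hsub : ((x :: t).toFinset : Set α) ⊆ S ∩ closedBall x (c * K) := fun a ha => by
    rw [Finset.mem_coe, List.mem_toFinset] at ha
    refine ⟨hlS a (hpre.subset ha), ?_⟩
    rw [mem_closedBall', ← ht]
    exact (h.prefix hpre).dist_head_le hc ha
  have hcard := (Set.encard_le_encard hsub).trans (hS x)
  rw [Set.encard_coe_eq_coe_finsetCard, List.toFinset_card_of_nodup (hnd.sublist hpre.sublist)]
    at hcard
  simp only [List.length_cons, ht, Nat.cast_le] at hcard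
  omega

structure IsAnchoredChain (S Λ : Set α) (r : ℝ) (l : List α) : Prop where
  subset : ∀ a ∈ l, a ∈ S
  nodup : l.Nodup
  isChain : l.IsChain fun a b => dist a b ≤ 2 * r
  anchored : ∃ b ∈ l.getLast?, ∃ z ∈ Λ, dist b z ≤ r

namespace IsAnchoredChain

variable {S Λ : Set α} {r : ℝ}

theorem suffix {l₁ l₂ : List α} (h : IsAnchoredChain S Λ r l₂) (hs : l₁ <:+ l₂)
    (hne : l₁ ≠ []) : IsAnchoredChain S Λ r l₁ where
  subset a ha := h.subset a (hs.subset ha)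
  nodup := h.nodup.sublist hs.sublist
  isChain := h.isChain.suffix hs
  anchored := by
    obtain ⟨s, rfl⟩ := hs
    simpa only [List.getLast?_append_of_ne_nil s hne] using h.anchored

theorem singleton {x z : α} (hx : x ∈ S) (hz : z ∈ Λ) (hxz : dist x z ≤ r) :
    IsAnchoredChain S Λ r [x] where
  subset _ ha := List.mem_singleton.mp ha ▸ hx
  nodup := List.nodup_singleton x
  isChain := List.isChain_singleton x
  anchored := ⟨x, rfl, z, hz, hxz⟩

theorem exists_cons {x y : α} {t : List α} (hx : x ∈ S) (h : IsAnchoredChain S Λ r (y :: t))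
    (hxy : dist x y ≤ 2 * r) : ∃ t', IsAnchoredChain S Λ r (x :: t') := by
  by_cases hmem : x ∈ y :: t
  · obtain ⟨s, t', hst⟩ := List.mem_iff_append.mp hmem
    exact ⟨t', h.suffix ⟨s, hst.symm⟩ (List.cons_ne_nil _ _)⟩
  · refine ⟨y :: t, fun a ha => (List.mem_cons.mp ha).elim (· ▸ hx) (h.subset a),
      List.nodup_cons.mpr ⟨hmem, h.nodup⟩,
      List.isChain_cons_cons.mpr ⟨hxy, h.isChain⟩, ?_⟩
    simpa only [List.getLast?_cons_cons] using h.anchored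

theorem exists_dist_head_add_le (hr : 0 ≤ r) {K : ℕ}
    (hS : ∀ x, (S ∩ closedBall x (2 * r * K)).encard ≤ K) {x : α} {t : List α}
    (h : IsAnchoredChain S Λ r (x :: t)) : ∃ z ∈ Λ, dist x z + r ≤ 2 * K * r := by
  obtain ⟨b, hb, z, hz, hbz⟩ := h.anchored
  have hlen : ((t.length + 1 : ℕ) : ℝ) ≤ K := by
    exact_mod_cast
      List.length_le_of_isChain_dist_le (by positivity) hS h.subset h.nodup h.isChain
  have hxb := h.isChain.dist_head_le (by positivity) (List.mem_of_getLast? hb)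
  refine ⟨z, hz, ?_⟩
  push_cast at hlen
  calc dist x z + r ≤ dist x b + dist b z + r := by grw [dist_triangle x b z]
    _ ≤ 2 * r * t.length + r + r := by gcongr
    _ = 2 * r * (t.length + 1) := by ring
    _ ≤ 2 * K * r := by nlinarith

end IsAnchoredChain

theorem exists_saturated_superset {r : ℝ} (hr : 0 ≤ r) {K : ℕ} {S : Set α}
    (hS : ∀ x, (S ∩ closedBall x (2 * r * K)).encard ≤ K) (Λ : Set α) :
    ∃ Λt : Set α, Λ ⊆ Λt ∧ Λt ⊆ {p | ∃ z ∈ Λ, dist p z ≤ 2 * K * r} ∧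
      ∀ x ∈ S, (closedBall x r ∩ Λt).Nonempty → closedBall x r ⊆ Λt := by
  refine ⟨Λ ∪ {p | ∃ x t, IsAnchoredChain S Λ r (x :: t) ∧ dist p x ≤ r},
    Set.subset_union_left, ?_, ?_⟩
  · rintro p (hp | ⟨x, t, h, hpx⟩)
    · exact ⟨p, hp, by rw [dist_self]; positivity⟩
    · obtain ⟨z, hz, hxz⟩ := h.exists_dist_head_add_le hr hS
      exact ⟨z, hz, (dist_triangle p x z).trans (by linarith)⟩
  · rintro x hx ⟨p, hpx, hp | ⟨y, t, h, hpy⟩⟩ q hq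
    · exact Or.inr ⟨x, [], .singleton hx hp (by rwa [dist_comm]), hq⟩
    · have hxy : dist x y ≤ 2 * r := by
        grw [dist_triangle x p y, dist_comm x p, mem_closedBall.mp hpx, hpy]; linarith
      obtain ⟨t', h'⟩ := h.exists_cons hx hxy
      exact Or.inr ⟨x, t', h', hq⟩

end Saturation

theorem finite_setOf_sum_natAbs_sub_le {d : ℕ} (x : Fin d → ℤ) (R : ℕ) :
    {y : Fin d → ℤ | ∑ i, (y i - x i).natAbs ≤ R}.Finite := by
  refine (Set.finite_Icc (x - fun _ => (R : ℤ)) (x + fun _ => (R : ℤ))).subset fun y hy => ?_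
  have hle i : (y i - x i).natAbs ≤ R :=
    (Finset.single_le_sum (fun j _ => Nat.zero_le (y j - x j).natAbs) (Finset.mem_univ i)).trans hy
  exact ⟨fun i => by have := hle i; simp only [Pi.sub_apply]; omega,
    fun i => by have := hle i; simp only [Pi.add_apply]; omega⟩

theorem saturation_lemma_general (d L K : ℕ)
    (S : Set (Fin d → ℤ))
    (hS : ∀ x : Fin d → ℤ,
      (S ∩ {y | ∑ i, (y i - x i).natAbs ≤ 4 * L * K}).ncard ≤ K)
    (Λ : Set (Fin d → ℤ)) :
    ∃ Λt : Set (Fin d → ℤ),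
      Λ ⊆ Λt ∧
      Λt ⊆ {x | ∃ y ∈ Λ, ∑ i, (x i - y i).natAbs ≤ 2 * K * L} ∧
      ∀ x ∈ S, ({y | ∑ i, (y i - x i).natAbs ≤ L} ∩ Λt).Nonempty →
        {y | ∑ i, (y i - x i).natAbs ≤ L} ⊆ Λt := by
  -- the instance on `Fin d → ℤ` is the sup metric; we need ℓ¹
  let : PseudoMetricSpace (Fin d → ℤ) :=
    .induced (WithLp.toLp 1) (inferInstance : PseudoMetricSpace (PiLp 1 fun _ : Fin d => ℤ))
  have hdist (x y : Fin d → ℤ) : dist x y = ((∑ i, (x i - y i).natAbs : ℕ) : ℝ) := by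
    change dist (WithLp.toLp 1 x) (WithLp.toLp 1 y) = _
    simp [PiLp.dist_eq_of_L1, Int.dist_eq, Nat.cast_natAbs]
  have hball (x : Fin d → ℤ) (R : ℕ) :
      closedBall x R = {y | ∑ i, (y i - x i).natAbs ≤ R} := by
    ext y; rw [mem_closedBall, hdist, Nat.cast_le]; rfl
  have hS' (x : Fin d → ℤ) : (S ∩ closedBall x (2 * L * K : ℕ)).encard ≤ K := by
    rw [hball]
    calc (S ∩ {y | ∑ i, (y i - x i).natAbs ≤ 2 * L * K}).encard
        ≤ (S ∩ {y | ∑ i, (y i - x i).natAbs ≤ 4 * L * K}).encard :=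
          Set.encard_le_encard fun y ⟨hyS, hy⟩ =>
            ⟨hyS, hy.trans (Nat.mul_le_mul_right K (by omega))⟩
      _ = (S ∩ {y | ∑ i, (y i - x i).natAbs ≤ 4 * L * K}).ncard :=
          ((finite_setOf_sum_natAbs_sub_le x _).inter_of_right S).cast_ncard_eq.symm
      _ ≤ K := by exact_mod_cast hS x
  obtain ⟨Λt, hΛt, hclose, hsat⟩ :=
    exists_saturated_superset (Nat.cast_nonneg L) (by exact_mod_cast hS') Λ
  refine ⟨Λt, hΛt, fun p hp => ?_, fun x hx => ?_⟩
  · obtain ⟨z, hz, hpz⟩ := hclose hp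
    exact ⟨z, hz, by rw [hdist] at hpz; exact_mod_cast hpz⟩
  · simpa only [hball] using hsat x hx

/-- Saturation lemma: let `L, K` be positive integers and `S ⊂ ℤ^d` satisfy
`|S ∩ (Q_{4LK} + x)| ≤ K` for all `x`, where `Q_R` is the ℓ¹-ball of radius `R`.
Then any finite `Λ ⊂ ℤ^d` admits an extension `Λ̃` with
`Λ ⊆ Λ̃ ⊆ {x : dist₁(x,Λ) ≤ 2KL}` such that every translate `Q_L + x` (`x ∈ S`)
meeting `Λ̃` is contained in `Λ̃`. -/
theorem saturation_lemma (d L K : ℕ) (hL : 0 < L) (hK : 0 < K)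
    (S : Set (Fin d → ℤ))
    (hS : ∀ x : Fin d → ℤ,
      (S ∩ {y | ∑ i, (y i - x i).natAbs ≤ 4 * L * K}).ncard ≤ K)
    (Λ : Set (Fin d → ℤ)) (hΛ : Λ.Finite) :
    ∃ Λt : Set (Fin d → ℤ),
      Λ ⊆ Λt ∧
      Λt ⊆ {x | ∃ y ∈ Λ, ∑ i, (x i - y i).natAbs ≤ 2 * K * L} ∧
      ∀ x ∈ S, ({y | ∑ i, (y i - x i).natAbs ≤ L} ∩ Λt).Nonempty →
        {y | ∑ i, (y i - x i).natAbs ≤ L} ⊆ Λt :=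
  saturation_lemma_general d L K S hS Λ
end

section
/- Let v be a non-constant analytic function on 𝕋 = ℝ/ℤ whose shortest positive period is 1. Then there exist s ∈ ℕ and c > 0 such that max_{0≤l≤s} |∂_θ^l (v(θ+φ) − v(θ))| ≥ c ‖φ‖_𝕋 for all θ, φ ∈ 𝕋. -/
/-!
Write `Dₗ = ∂^l v`. The divided differences `(Dₗ(θ + ψ) - Dₗ θ) / ψ`, extended by `Dₗ₊₁ θ` at
`ψ = 0`, are jointly continuous in `(θ, ψ)`, and at every point of the compact set
`[0, 1] × [-1/2, 1/2]` one of them is nonzero: for `ψ = 0` because a non-constant analytic `v`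
has a nonzero derivative of some order at `θ`, and for `ψ ≠ 0` because otherwise the analytic
function `v(· + ψ) - v` would vanish to infinite order at `θ`, hence identically, making
`0 < |ψ| ≤ 1/2` a period. Compactness gives finitely many orders and a uniform lower bound `c`,
which is the claim after reducing `θ` modulo `1` and `φ` to `φ - round φ`.
-/

open Set Function

theorem IsCompact.exists_pos_le_abs_of_forall_exists_ne_zero {X : Type*} [TopologicalSpace X]
    {K : Set X} (hK : IsCompact K) {F : ℕ → X → ℝ} (hF : ∀ l, Continuous (F l))
    (h : ∀ x ∈ K, ∃ l, F l x ≠ 0) :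
    ∃ s : ℕ, ∃ c > 0, ∀ x ∈ K, ∃ l ≤ s, c ≤ |F l x| := by
  let U : ℕ → Set X := fun n => ⋃ l ≤ n, {x | 1 / (n + 1 : ℝ) < |F l x|}
  have hU_open (n : ℕ) : IsOpen (U n) :=
    isOpen_biUnion fun l _ => isOpen_lt continuous_const (hF l).abs
  have hU_mono : Monotone U := by
    intro m n hmn x hx
    obtain ⟨l, hl, hx⟩ := mem_iUnion₂.mp hx
    refine mem_iUnion₂.mpr ⟨l, hl.trans hmn, ?_⟩
    exact (Nat.one_div_le_one_div hmn).trans_lt (mem_ofPred_eq ▸ hx)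
  have hK_cover : K ⊆ ⋃ n, U n := by
    intro x hx
    obtain ⟨l, hl⟩ := h x hx
    obtain ⟨m, hm⟩ := exists_nat_one_div_lt (abs_pos.mpr hl)
    refine mem_iUnion.mpr ⟨max l m, mem_iUnion₂.mpr ⟨l, le_max_left _ _, ?_⟩⟩
    exact lt_of_le_of_lt (Nat.one_div_le_one_div (le_max_right l m)) hm
  obtain ⟨n, hn⟩ := hK.elim_directed_cover U hU_open hK_cover hU_mono.directed_le
  exact ⟨n, 1 / (n + 1), by positivity, fun x hx =>
    (mem_iUnion₂.mp (hn hx)).imp fun _ ⟨hl, hlt⟩ => ⟨hl, hlt.le⟩⟩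

theorem eq_zero_of_forall_iteratedDeriv_eq_zero {𝕜 E : Type*} [NontriviallyNormedField 𝕜]
    [CharZero 𝕜] [PreconnectedSpace 𝕜] [NormedAddCommGroup E] [NormedSpace 𝕜 E] [CompleteSpace E]
    {f : 𝕜 → E} (hf : ∀ z, AnalyticAt 𝕜 f z) {z₀ : 𝕜} (h : ∀ n, iteratedDeriv n f z₀ = 0) :
    f = 0 :=
  (AnalyticOnNhd.analyticOrderAt_eq_top_iff_eq_zero z₀ hf).mp <|
    ENat.eq_top_iff_forall_ge.mpr fun _ =>
      (natCast_le_analyticOrderAt_iff_iteratedDeriv_eq_zero (hf z₀)).mpr fun i _ => h i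

theorem Function.Periodic.iteratedDeriv {𝕜 E : Type*} [NontriviallyNormedField 𝕜]
    [NormedAddCommGroup E] [NormedSpace 𝕜 E] {f : 𝕜 → E} {c : 𝕜} (h : Periodic f c) (n : ℕ) :
    Periodic (_root_.iteratedDeriv n f) c := fun x => by
  simpa [h.funext] using (congrFun (iteratedDeriv_comp_add_const (n := n) (f := f) (s := c)) x).symm

theorem iteratedDeriv_comp_add_const_sub {𝕜 E : Type*} [NontriviallyNormedField 𝕜]
    [NormedAddCommGroup E] [NormedSpace 𝕜 E] {f : 𝕜 → E} {n : ℕ} (hf : ContDiff 𝕜 n f)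
    (ψ θ : 𝕜) :
    iteratedDeriv n (fun t => f (t + ψ) - f t) θ =
      iteratedDeriv n f (θ + ψ) - iteratedDeriv n f θ := by
  have hf_shift : ContDiff 𝕜 n fun t => f (t + ψ) := hf.comp (contDiff_id.add contDiff_const)
  rw [iteratedDeriv_fun_sub hf_shift.contDiffAt hf.contDiffAt, iteratedDeriv_comp_add_const]

section DivDiff

variable {E : Type*} [NormedAddCommGroup E] [NormedSpace ℝ E] {f : ℝ → E}

/-- The divided difference `(f (θ + ψ) - f θ) / ψ`, written as an integral so that it is jointly
continuous in `(θ, ψ)` across `ψ = 0`, where it equals `deriv f θ`. -/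
noncomputable def divDiff (f : ℝ → E) (θ ψ : ℝ) : E :=
  ∫ t in (0 : ℝ)..1, deriv f (θ + t * ψ)

theorem continuous_divDiff (hf : Continuous (deriv f)) :
    Continuous fun p : ℝ × ℝ => divDiff f p.1 p.2 :=
  intervalIntegral.continuous_parametric_intervalIntegral_of_continuous' (by fun_prop) 0 1

@[simp]
theorem divDiff_zero_right [CompleteSpace E] (θ : ℝ) : divDiff f θ 0 = deriv f θ := by
  simp [divDiff]

theorem smul_divDiff [CompleteSpace E] (hf : Differentiable ℝ f) (hf' : Continuous (deriv f))
    (θ ψ : ℝ) :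
    ψ • divDiff f θ ψ = f (θ + ψ) - f θ :=
  intervalIntegral.integral_unitInterval_deriv_eq_sub (by fun_prop) fun t _ => (hf _).hasDerivAt

end DivDiff

section Analytic

variable {E : Type*} [NormedAddCommGroup E] [NormedSpace ℝ E] [CompleteSpace E] {f : ℝ → E}

theorem exists_iteratedDeriv_succ_ne_zero (hf : ∀ x, AnalyticAt ℝ f x)
    (hnc : ∃ x y, f x ≠ f y) (θ : ℝ) : ∃ k, iteratedDeriv (k + 1) f θ ≠ 0 := by
  by_contra! h
  have hderiv : deriv f = 0 :=
    eq_zero_of_forall_iteratedDeriv_eq_zero (fun x => (hf x).deriv) (z₀ := θ) fun k => by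
      rw [← iteratedDeriv_succ']
      exact h k
  obtain ⟨x, y, hxy⟩ := hnc
  exact hxy (is_const_of_deriv_eq_zero (fun x => (hf x).differentiableAt) (congrFun hderiv) x y)

theorem periodic_of_forall_iteratedDeriv_add_eq (hf : ∀ x, AnalyticAt ℝ f x) {θ ψ : ℝ}
    (h : ∀ n, iteratedDeriv n f (θ + ψ) = iteratedDeriv n f θ) : Periodic f ψ := by
  have hg (x : ℝ) : AnalyticAt ℝ (fun t => f (t + ψ) - f t) x :=
    ((hf (x + ψ)).comp_of_eq (analyticAt_id.add analyticAt_const) rfl).sub (hf x)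
  have hdiff : (fun t => f (t + ψ) - f t) = 0 :=
    eq_zero_of_forall_iteratedDeriv_eq_zero hg (z₀ := θ) fun n => by
      rw [iteratedDeriv_comp_add_const_sub (AnalyticOnNhd.contDiff fun x _ => hf x), h n,
        sub_self]
  exact fun x => sub_eq_zero.mp (congrFun hdiff x)

end Analytic

theorem mul_divDiff_iteratedDeriv {v : ℝ → ℝ} {l : ℕ} (hv : ContDiff ℝ (l + 1) v) (θ ψ : ℝ) :
    ψ * divDiff (iteratedDeriv l v) θ ψ = iteratedDeriv l v (θ + ψ) - iteratedDeriv l v θ := by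
  refine smul_divDiff (hv.differentiable_iteratedDeriv' l) ?_ θ ψ
  rw [← iteratedDeriv_succ]
  exact hv.continuous_iteratedDeriv' (l + 1)

theorem not_periodic_of_abs_lt_one {v : ℝ → ℝ}
    (hshort : ∀ p : ℝ, 0 < p → p < 1 → ¬ Periodic v p) {ψ : ℝ} (hψ₀ : ψ ≠ 0) (hψ₁ : |ψ| < 1) :
    ¬ Periodic v ψ := by
  rcases hψ₀.lt_or_gt with hneg | hpos
  · exact fun h => hshort (-ψ) (neg_pos.mpr hneg) (abs_of_neg hneg ▸ hψ₁) h.neg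
  · exact hshort ψ hpos (abs_of_pos hpos ▸ hψ₁)

theorem exists_divDiff_iteratedDeriv_ne_zero {v : ℝ → ℝ} (hv : ∀ x, AnalyticAt ℝ v x)
    (hshort : ∀ p : ℝ, 0 < p → p < 1 → ¬ Periodic v p) (hnc : ∃ x y : ℝ, v x ≠ v y)
    (θ : ℝ) {ψ : ℝ} (hψ : |ψ| < 1) : ∃ l, divDiff (iteratedDeriv l v) θ ψ ≠ 0 := by
  rcases eq_or_ne ψ 0 with rfl | hψ₀
  · obtain ⟨k, hk⟩ := exists_iteratedDeriv_succ_ne_zero hv hnc θ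
    exact ⟨k, by rwa [divDiff_zero_right, ← iteratedDeriv_succ]⟩
  · obtain ⟨l, hl⟩ : ∃ l, iteratedDeriv l v (θ + ψ) ≠ iteratedDeriv l v θ := by
      by_contra! h
      exact not_periodic_of_abs_lt_one hshort hψ₀ hψ (periodic_of_forall_iteratedDeriv_add_eq hv h)
    refine ⟨l, fun h => hl (sub_eq_zero.mp ?_)⟩
    rw [← mul_divDiff_iteratedDeriv (AnalyticOnNhd.contDiff fun x _ => hv x), h, mul_zero]

theorem exists_pos_mul_abs_le_abs_iteratedDeriv_add_sub {v : ℝ → ℝ} (hv : ∀ x, AnalyticAt ℝ v x)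
    (hper : Periodic v 1) (hshort : ∀ p : ℝ, 0 < p → p < 1 → ¬ Periodic v p)
    (hnc : ∃ x y : ℝ, v x ≠ v y) :
    ∃ s : ℕ, ∃ c > 0, ∀ θ ψ : ℝ, |ψ| ≤ 1 / 2 →
      ∃ l ≤ s, c * |ψ| ≤ |iteratedDeriv l v (θ + ψ) - iteratedDeriv l v θ| := by
  have hvC (n : ℕ) : ContDiff ℝ n v := AnalyticOnNhd.contDiff fun x _ => hv x
  have hcont (l : ℕ) : Continuous (deriv (iteratedDeriv l v)) := by
    rw [← iteratedDeriv_succ]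
    exact (hvC _).continuous_iteratedDeriv' _
  have hK : IsCompact (Icc (0 : ℝ) 1 ×ˢ Icc (-(1 / 2) : ℝ) (1 / 2)) :=
    isCompact_Icc.prod isCompact_Icc
  obtain ⟨s, c, hc, hsc⟩ := hK.exists_pos_le_abs_of_forall_exists_ne_zero
    (F := fun l p => divDiff (iteratedDeriv l v) p.1 p.2)
    (fun l => continuous_divDiff (hcont l))
    fun p hp => exists_divDiff_iteratedDeriv_ne_zero hv hshort hnc p.1
      ((abs_le.mpr hp.2).trans_lt (by norm_num))
  refine ⟨s, c, hc, fun θ ψ hψ => ?_⟩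
  obtain ⟨l, hls, hl⟩ := hsc (Int.fract θ, ψ)
    ⟨⟨Int.fract_nonneg θ, (Int.fract_lt_one θ).le⟩, abs_le.mp hψ⟩
  refine ⟨l, hls, ?_⟩
  have hshift (x : ℝ) : iteratedDeriv l v (x - ⌊θ⌋) = iteratedDeriv l v x := by
    simpa using (hper.iteratedDeriv l).sub_int_mul_eq (x := x) ⌊θ⌋
  have h := mul_divDiff_iteratedDeriv (hvC (l + 1)) (Int.fract θ) ψ
  rw [Int.fract, sub_add_eq_add_sub, hshift, hshift] at h
  rw [← h, abs_mul, mul_comm c]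
  exact mul_le_mul_of_nonneg_left hl (abs_nonneg ψ)

/-- Transversality of a non-constant real analytic function with shortest period 1:
there exist `s ∈ ℕ` and `c > 0` such that
`max_{0≤l≤s} |∂_θ^l (v(θ+φ) − v(θ))| ≥ c ‖φ‖_𝕋` for all `θ, φ`, where
`‖φ‖_𝕋 = dist(φ, ℤ) = |φ − round φ|`. -/
theorem analytic_transversality (v : ℝ → ℝ)
    (hv : ∀ x : ℝ, AnalyticAt ℝ v x)
    (hper : Function.Periodic v 1)
    (hshort : ∀ p : ℝ, 0 < p → p < 1 → ¬ Function.Periodic v p)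
    (hnc : ∃ x y : ℝ, v x ≠ v y) :
    ∃ (s : ℕ) (c : ℝ), 0 < c ∧ ∀ θ φ : ℝ, ∃ l ≤ s,
      c * |φ - round φ| ≤ |iteratedDeriv l (fun t => v (t + φ) - v t) θ| := by
  obtain ⟨s, c, hc, hbound⟩ := exists_pos_mul_abs_le_abs_iteratedDeriv_add_sub hv hper hshort hnc
  refine ⟨s, c, hc, fun θ φ => ?_⟩
  have hshift (t : ℝ) : v (t + φ) = v (t + (φ - round φ)) := by
    simpa [add_sub_assoc'] using (hper.sub_int_mul_eq (x := t + φ) (round φ)).symm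
  simp_rw [hshift, iteratedDeriv_comp_add_const_sub (AnalyticOnNhd.contDiff fun x _ => hv x)]
  exact hbound θ _ (abs_sub_round φ)
end

section
/- Let u be a non-constant analytic function on the annulus A_{2η} = {z ∈ ℂ : e^{−4πη} ≤ |z| ≤ e^{4πη}} with sup_{A_η}|u| ≤ C_u. Then there exists M ≥ 2 such that for every E* ∈ {u(z) : z ∈ A_{η/4}}, the function u(z) − E* has at most M roots counted with multiplicity in A_{η/2}. -/
/-!
Near each point `z₀` of the annulus, `u - u z₀ = φ ^ m` for an analytic chart `φ` with
`φ' ≠ 0`, where `m` is finite by the identity theorem since `u` is non-constant on the connected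
annulus. Through the chart, the roots of `u - E` correspond injectively, with the same
multiplicities, to roots of `y ^ m - (E - u z₀)`, so near `z₀` there are at most `m` of them for
every `E`. Compactness of `A_{η/2}` turns these local bounds into a uniform one.
-/

open Filter Topology Set Polynomial

namespace Polynomial

variable {𝕜 : Type*} [NontriviallyNormedField 𝕜]

theorem analyticOrderAt_eval_eq_rootMultiplicity {p : 𝕜[X]} (hp : p ≠ 0) (x : 𝕜) :
    analyticOrderAt (eval · p) x = p.rootMultiplicity x := by
  obtain ⟨q, hpq, hq⟩ := p.exists_eq_pow_rootMultiplicity_mul_and_not_dvd hp x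
  refine ((AnalyticOnNhd.eval_polynomial p) x trivial).analyticOrderAt_eq_natCast.2
    ⟨(eval · q), AnalyticOnNhd.eval_polynomial q x trivial, ?_, ?_⟩
  · rwa [dvd_iff_isRoot] at hq
  · refine Eventually.of_forall fun z => ?_
    conv_lhs => rw [hpq]
    simp

theorem sum_analyticOrderAt_eval_le_natDegree {p : 𝕜[X]} (hp : p ≠ 0) (S : Finset 𝕜) :
    ∑ x ∈ S, (analyticOrderAt (eval · p) x).toNat ≤ p.natDegree := by
  classical
  calc ∑ x ∈ S, (analyticOrderAt (eval · p) x).toNat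
      = ∑ x ∈ S, p.roots.count x := by
        simp [analyticOrderAt_eval_eq_rootMultiplicity hp, count_roots]
    _ ≤ ∑ x ∈ S ∪ p.roots.toFinset, p.roots.count x :=
        Finset.sum_le_sum_of_subset Finset.subset_union_left
    _ = Multiset.card p.roots := Multiset.sum_count_eq_card fun x hx => by simp [hx]
    _ ≤ p.natDegree := card_roots' p

end Polynomial

theorem sum_analyticOrderAt_pow_sub_le {𝕜 : Type*} [NontriviallyNormedField 𝕜] {m : ℕ}
    (hm : m ≠ 0) (a : 𝕜) (S : Finset 𝕜) :
    ∑ y ∈ S, (analyticOrderAt (fun y : 𝕜 => y ^ m - a) y).toNat ≤ m := by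
  simpa using
    sum_analyticOrderAt_eval_le_natDegree (X_pow_sub_C_ne_zero (Nat.pos_of_ne_zero hm) a) S

theorem IsCompact.exists_forall_sum_le_of_locally_bounded {X ι R : Type*} [TopologicalSpace X]
    [AddCommMonoid R] [PartialOrder R] [IsOrderedAddMonoid R] [CanonicallyOrderedAdd R]
    {K : Set X} (hK : IsCompact K) (w : ι → X → R)
    (hloc : ∀ x ∈ K, ∃ s ∈ 𝓝 x, ∃ m, ∀ i (F : Finset X), ↑F ⊆ s → ∑ z ∈ F, w i z ≤ m) :
    ∃ M, ∀ i (F : Finset X), ↑F ⊆ K → ∑ z ∈ F, w i z ≤ M := by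
  classical
  choose! s hs m hm using hloc
  obtain ⟨t, htK, hKt⟩ := hK.elim_nhds_subcover s hs
  refine ⟨∑ x ∈ t, m x, fun i F hFK => ?_⟩
  calc ∑ z ∈ F, w i z ≤ ∑ z ∈ F, ∑ x ∈ t, if z ∈ s x then w i z else 0 := by
        refine Finset.sum_le_sum fun z hz => ?_
        obtain ⟨x, hxt, hzx⟩ := mem_iUnion₂.1 (hKt (hFK hz))
        simpa [hzx] using Finset.single_le_sum (f := fun x => if z ∈ s x then w i z else 0)
          (fun _ _ => zero_le) hxt
    _ = ∑ x ∈ t, ∑ z ∈ F with z ∈ s x, w i z := by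
        rw [Finset.sum_comm]
        simp [Finset.sum_filter]
    _ ≤ ∑ x ∈ t, m x := Finset.sum_le_sum fun x hx =>
        hm x (htK x hx) i _ fun z hz => (Finset.mem_filter.1 hz).2

theorem isPreconnected_setOf_le_norm_le {E : Type*} [NormedAddCommGroup E] [NormedSpace ℝ E]
    (h : 1 < Module.rank ℝ E) {a : ℝ} (ha : 0 < a) (b : ℝ) :
    IsPreconnected {z : E | a ≤ ‖z‖ ∧ ‖z‖ ≤ b} := by
  have himage : {z : E | a ≤ ‖z‖ ∧ ‖z‖ ≤ b} =
      (fun p : ℝ × E => p.1 • p.2) '' (Icc a b ×ˢ Metric.sphere 0 1) := by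
    ext z
    constructor
    · rintro ⟨haz, hzb⟩
      have hz : ‖z‖ ≠ 0 := (ha.trans_le haz).ne'
      refine ⟨(‖z‖, ‖z‖⁻¹ • z), ⟨⟨haz, hzb⟩, ?_⟩, ?_⟩
      · simp [norm_smul, hz]
      · simp [smul_smul, hz]
    · rintro ⟨⟨r, v⟩, ⟨⟨har, hrb⟩, hv⟩, rfl⟩
      have hr : ‖r • v‖ = r := by
        simp_all [norm_smul, abs_of_pos (ha.trans_le har)]
      simp [hr, har, hrb]
  rw [himage]
  exact (isPreconnected_Icc.prod (isPreconnected_sphere h 0 1)).image _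
    (continuous_fst.smul continuous_snd).continuousOn

theorem isCompact_setOf_le_norm_le {E : Type*} [NormedAddCommGroup E] [ProperSpace E]
    (a b : ℝ) : IsCompact {z : E | a ≤ ‖z‖ ∧ ‖z‖ ≤ b} :=
  (isCompact_closedBall 0 b).of_isClosed_subset
    ((isClosed_le continuous_const continuous_norm).inter
      (isClosed_le continuous_norm continuous_const))
    fun _ hz => mem_closedBall_zero_iff.2 hz.2

theorem AnalyticOnNhd.analyticOrderAt_sub_ne_top_of_isPreconnected {𝕜 E : Type*}
    [NontriviallyNormedField 𝕜] [NormedAddCommGroup E] [NormedSpace 𝕜 E] {f : 𝕜 → E}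
    {U : Set 𝕜} (hf : AnalyticOnNhd 𝕜 f U) (hU : IsPreconnected U) {x y z : 𝕜} (hx : x ∈ U)
    (hy : y ∈ U) (hxy : f x ≠ f y) (hz : z ∈ U) : analyticOrderAt (f · - f z) z ≠ ⊤ := by
  have hfc : AnalyticOnNhd 𝕜 (f · - f z) U := fun w hw => (hf w hw).sub analyticAt_const
  have key : ∀ w ∈ U, f w ≠ f z → analyticOrderAt (f · - f z) z ≠ ⊤ := fun w hw hwz =>
    hfc.analyticOrderAt_ne_top_of_isPreconnected hU hw hz <| by
      rw [(hfc w hw).analyticOrderAt_eq_zero.2 (sub_ne_zero.2 hwz)]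
      exact ENat.zero_ne_top
  by_cases hxz : f x = f z
  · exact key y hy (hxz ▸ hxy.symm)
  · exact key x hx hxz

theorem AnalyticAt.exists_analyticAt_pow_eq {g : ℂ → ℂ} {z₀ : ℂ} (hg : AnalyticAt ℂ g z₀)
    (hg₀ : g z₀ ≠ 0) {m : ℕ} (hm : m ≠ 0) :
    ∃ h : ℂ → ℂ, AnalyticAt ℂ h z₀ ∧ h z₀ ≠ 0 ∧ ∀ z, h z ^ m = g z := by
  obtain ⟨α, hα⟩ := IsAlgClosed.exists_pow_nat_eq (g z₀) (Nat.pos_of_ne_zero hm)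
  -- the principal branch is used only near `z₀`, where `g / g z₀` is close to `1`
  refine ⟨fun z => α * (g z / g z₀) ^ (m⁻¹ : ℂ), ?_, ?_, fun z => ?_⟩
  · refine analyticAt_const.mul ((hg.div analyticAt_const hg₀).cpow analyticAt_const ?_)
    simp [hg₀]
  · have hα₀ : α ≠ 0 := by rintro rfl; exact hg₀ (by simp [← hα, hm])
    simp [hg₀, hα₀]
  · rw [mul_pow, Complex.cpow_nat_inv_pow _ hm, hα, mul_div_cancel₀ _ hg₀]

theorem AnalyticAt.exists_eventuallyEq_pow_of_analyticOrderAt_eq {f : ℂ → ℂ} {z₀ : ℂ}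
    (hf : AnalyticAt ℂ f z₀) {m : ℕ} (hm : m ≠ 0) (hord : analyticOrderAt f z₀ = m) :
    ∃ φ : ℂ → ℂ, AnalyticAt ℂ φ z₀ ∧ deriv φ z₀ ≠ 0 ∧ f =ᶠ[𝓝 z₀] fun z => φ z ^ m := by
  obtain ⟨g, hg, hg₀, hfg⟩ := hf.analyticOrderAt_eq_natCast.1 hord
  obtain ⟨h, hh, hh₀, hhg⟩ := hg.exists_analyticAt_pow_eq hg₀ hm
  have hφ : HasDerivAt (fun z => (z - z₀) * h z) (h z₀) z₀ := by
    simpa using ((hasDerivAt_id z₀).sub_const z₀).fun_mul hh.differentiableAt.hasDerivAt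
  refine ⟨fun z => (z - z₀) * h z, by fun_prop, hφ.deriv ▸ hh₀, ?_⟩
  filter_upwards [hfg] with z hz
  simp [hz, mul_pow, hhg]

theorem AnalyticAt.exists_mem_nhds_sum_analyticOrderAt_sub_le {f : ℂ → ℂ} {z₀ : ℂ}
    (hf : AnalyticAt ℂ f z₀) (hfin : analyticOrderAt (f · - f z₀) z₀ ≠ ⊤) :
    ∃ s ∈ 𝓝 z₀, ∃ m : ℕ, ∀ (E : ℂ) (F : Finset ℂ), ↑F ⊆ s →
      ∑ z ∈ F, (analyticOrderAt (f · - E) z).toNat ≤ m := by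
  set m := (analyticOrderAt (f · - f z₀) z₀).toNat
  have hm : m ≠ 0 := by
    simp only [m, ne_eq, ENat.toNat_eq_zero, hfin, or_false]
    exact (hf.sub analyticAt_const).analyticOrderAt_ne_zero.2 (sub_self _)
  obtain ⟨φ, hφ, hφ', hfφ⟩ :=
    (hf.sub analyticAt_const).exists_eventuallyEq_pow_of_analyticOrderAt_eq hm
      (ENat.natCast_toNat hfin).symm
  obtain ⟨s, hs, hψ⟩ := (hφ.hasStrictDerivAt.eventually_left_inverse hφ').exists_mem
  have hinj : InjOn φ s := LeftInvOn.injOn hψ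
  have hgood : ∀ᶠ z in 𝓝 z₀, AnalyticAt ℂ φ z ∧ deriv φ z ≠ 0 ∧
      (f · - f z₀) =ᶠ[𝓝 z] fun w => φ w ^ m :=
    hφ.eventually_analyticAt.and ((hφ.deriv.continuousAt.eventually_ne hφ').and
      hfφ.eventually_nhds)
  refine ⟨s ∩ {z | _}, inter_mem hs hgood, m, fun E F hF => ?_⟩
  -- near each point of `s`, `f - E` is the polynomial `y ^ m - (E - f z₀)` composed with the
  -- chart `φ`, which does not change orders since `φ' ≠ 0`
  have hcomp : ∀ z ∈ F, analyticOrderAt (f · - E) z =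
      analyticOrderAt (fun y => y ^ m - (E - f z₀)) (φ z) := by
    intro z hz
    obtain ⟨-, hφz, hφz', hfz⟩ := hF hz
    rw [← analyticOrderAt_comp_of_deriv_ne_zero hφz hφz']
    refine analyticOrderAt_congr ?_
    filter_upwards [hfz] with w hw
    simp [← hw]
  calc ∑ z ∈ F, (analyticOrderAt (f · - E) z).toNat
      = ∑ z ∈ F, (analyticOrderAt (fun y => y ^ m - (E - f z₀)) (φ z)).toNat :=
        Finset.sum_congr rfl fun z hz => by rw [hcomp z hz]
    _ = ∑ y ∈ F.image φ, (analyticOrderAt (fun y => y ^ m - (E - f z₀)) y).toNat := by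
        rw [Finset.sum_image fun x hx y hy => hinj (hF hx).1 (hF hy).1]
    _ ≤ m := sum_analyticOrderAt_pow_sub_le hm _ _

theorem annulus_root_count_bound_general (η : ℝ) (hη : 0 < η) (u : ℂ → ℂ)
    (hu : ∀ z : ℂ,
      Real.exp (-(4 * Real.pi * η)) ≤ ‖z‖ →
      ‖z‖ ≤ Real.exp (4 * Real.pi * η) → AnalyticAt ℂ u z)
    (hnc : ∃ z w : ℂ,
      (Real.exp (-(4 * Real.pi * η)) ≤ ‖z‖ ∧
        ‖z‖ ≤ Real.exp (4 * Real.pi * η)) ∧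
      (Real.exp (-(4 * Real.pi * η)) ≤ ‖w‖ ∧
        ‖w‖ ≤ Real.exp (4 * Real.pi * η)) ∧ u z ≠ u w) :
    ∃ M : ℕ, 2 ≤ M ∧ ∀ E : ℂ,
      (∃ ζ : ℂ, Real.exp (-(2 * Real.pi * (η / 4))) ≤ ‖ζ‖ ∧
        ‖ζ‖ ≤ Real.exp (2 * Real.pi * (η / 4)) ∧ u ζ = E) →
      ∀ T : Finset ℂ,
        ∀ hT : (∀ z ∈ T, (Real.exp (-(2 * Real.pi * (η / 2))) ≤ ‖z‖ ∧
          ‖z‖ ≤ Real.exp (2 * Real.pi * (η / 2))) ∧ u z = E),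
        (∑ z ∈ T.attach,
          (analyticOrderAt (u - fun _ => E) z.1).toNat) ≤ M := by
  obtain ⟨z, w, hz, hw, hzw⟩ := hnc
  have hπη : 0 < Real.pi * η := by positivity
  have hKA : ∀ x : ℂ, Real.exp (-(2 * Real.pi * (η / 2))) ≤ ‖x‖ ∧
      ‖x‖ ≤ Real.exp (2 * Real.pi * (η / 2)) →
      Real.exp (-(4 * Real.pi * η)) ≤ ‖x‖ ∧ ‖x‖ ≤ Real.exp (4 * Real.pi * η) :=
    fun x hx => ⟨(Real.exp_le_exp.2 (by linarith)).trans hx.1,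
      hx.2.trans (Real.exp_le_exp.2 (by linarith))⟩
  have hA : AnalyticOnNhd ℂ u {x | Real.exp (-(4 * Real.pi * η)) ≤ ‖x‖ ∧
      ‖x‖ ≤ Real.exp (4 * Real.pi * η)} := fun x hx => hu x hx.1 hx.2
  obtain ⟨M, hM⟩ := (isCompact_setOf_le_norm_le (E := ℂ) (Real.exp (-(2 * Real.pi * (η / 2))))
      (Real.exp (2 * Real.pi * (η / 2)))).exists_forall_sum_le_of_locally_bounded
      (fun E z => (analyticOrderAt (u · - E) z).toNat) fun x hx =>
    (hA x (hKA x hx)).exists_mem_nhds_sum_analyticOrderAt_sub_le <|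
      hA.analyticOrderAt_sub_ne_top_of_isPreconnected
        (isPreconnected_setOf_le_norm_le (by simp) (Real.exp_pos _) _) hz hw hzw (hKA x hx)
  refine ⟨M + 2, by omega, fun E _ T hT => ?_⟩
  rw [Finset.sum_attach T fun z => (analyticOrderAt (u - fun _ => E) z).toNat]
  exact (hM E T fun z hz => (hT z hz).1).trans (Nat.le_add_right _ _)

/-- A non-constant analytic function on the annulus `A_{2η}` bounded by `C_u` on `A_η`
has a uniform bound `M ≥ 2` on the number of roots (counted with multiplicity, via the
vanishing order) of `u − E*` in `A_{η/2}`, uniformly over `E*` in `u(A_{η/4})`. -/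
theorem annulus_root_count_bound (η Cu : ℝ) (hη : 0 < η) (u : ℂ → ℂ)
    (hu : ∀ z : ℂ,
      Real.exp (-(4 * Real.pi * η)) ≤ ‖z‖ →
      ‖z‖ ≤ Real.exp (4 * Real.pi * η) → AnalyticAt ℂ u z)
    (hbound : ∀ z : ℂ,
      Real.exp (-(2 * Real.pi * η)) ≤ ‖z‖ →
      ‖z‖ ≤ Real.exp (2 * Real.pi * η) → ‖u z‖ ≤ Cu)
    (hnc : ∃ z w : ℂ,
      (Real.exp (-(4 * Real.pi * η)) ≤ ‖z‖ ∧
        ‖z‖ ≤ Real.exp (4 * Real.pi * η)) ∧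
      (Real.exp (-(4 * Real.pi * η)) ≤ ‖w‖ ∧
        ‖w‖ ≤ Real.exp (4 * Real.pi * η)) ∧ u z ≠ u w) :
    ∃ M : ℕ, 2 ≤ M ∧ ∀ E : ℂ,
      (∃ ζ : ℂ, Real.exp (-(2 * Real.pi * (η / 4))) ≤ ‖ζ‖ ∧
        ‖ζ‖ ≤ Real.exp (2 * Real.pi * (η / 4)) ∧ u ζ = E) →
      ∀ T : Finset ℂ,
        ∀ hT : (∀ z ∈ T, (Real.exp (-(2 * Real.pi * (η / 2))) ≤ ‖z‖ ∧
          ‖z‖ ≤ Real.exp (2 * Real.pi * (η / 2))) ∧ u z = E),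
        (∑ z ∈ T.attach,
          (analyticOrderAt (u - fun _ => E) z.1).toNat) ≤ M :=
  annulus_root_count_bound_general η hη u hu hnc
end

section
/- Let T : 𝕋 → 𝕋 × 𝕋, and suppose {θ^{(i)}}_{i=1}^{m} ⊂ ℂ/ℤ, ω ∈ 𝕋^d Diophantine, L ∈ ℕ, and δ̄ > 0 are such that: (a) for each i and each x in the ℓ¹-ball Q_{L} with ‖θ^{(i)} + x·ω − θ^{(i′)}‖_𝕋 ≤ δ̄ for some i′, any i″ failing this bound satisfies ‖θ^{(i)} + x·ω − θ^{(i″)}‖_𝕋 > G where G > 2δ̄; and (b) for x ∈ Q_{L^α}∖Ω^{(i)}, min_{i′}‖θ^{(i)} + x·ω − θ^{(i′)}‖_𝕋 > G. Then the relation θ^{(i)} ∼ θ^{(i′)} :⇔ ∃x ∈ Q_L with ‖θ^{(i)} + x·ω − θ^{(i′)}‖_𝕋 ≤ δ̄ is an equivalence relation (reflexivity, symmetry, and transitivity hold). -/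
/-!
Reflexivity and symmetry hold because `‖·‖_𝕋` vanishes at `0` and is invariant under negation,
with `x ↦ -x` preserving `Q_L`. For transitivity, resonances `x, y ∈ Q_L` from `θ i` to `θ i'` and
from `θ i'` to `θ i''` give, by the triangle inequality, `x + y ∈ Q_{2L} ⊆ Q_{L^α}` with
`‖θ i + (x + y)·ω − θ i''‖_𝕋 ≤ 2δ̄ < G`. By (b) this forces `x + y ∈ Ω^{(i)}`, and then (a) upgrades
the bound `≤ G` to `≤ δ̄`.
-/

/-- The distance on `ℂ/ℤ`: `‖a‖_𝕋 = inf_{l ∈ ℤ} |a − l|`. -/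
noncomputable def torusNorm (a : ℂ) : ℝ := ⨅ l : ℤ, ‖a - (l : ℂ)‖

lemma torusNorm_le (a : ℂ) (l : ℤ) : torusNorm a ≤ ‖a - l‖ :=
  ciInf_le ⟨0, by rintro r ⟨l, rfl⟩; exact norm_nonneg _⟩ l

lemma torusNorm_nonneg (a : ℂ) : 0 ≤ torusNorm a :=
  le_ciInf fun _ => norm_nonneg _

@[simp]
lemma torusNorm_zero : torusNorm 0 = 0 :=
  le_antisymm (by simpa using torusNorm_le 0 0) (torusNorm_nonneg 0)

lemma torusNorm_neg_le (a : ℂ) : torusNorm (-a) ≤ torusNorm a :=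
  le_ciInf fun l => by
    simpa [← norm_neg (a - l), add_comm, ← sub_eq_add_neg] using torusNorm_le (-a) (-l)

@[simp]
lemma torusNorm_neg (a : ℂ) : torusNorm (-a) = torusNorm a :=
  le_antisymm (torusNorm_neg_le a) (by simpa using torusNorm_neg_le (-a))

lemma torusNorm_add_le (a b : ℂ) : torusNorm (a + b) ≤ torusNorm a + torusNorm b :=
  le_ciInf_add_ciInf fun l l' =>
    calc torusNorm (a + b) ≤ ‖(a - l) + (b - l')‖ := by
          simpa [add_sub_add_comm] using torusNorm_le (a + b) (l + l')
      _ ≤ ‖a - l‖ + ‖b - l'‖ := norm_add_le _ _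

namespace Resonance

variable {d m : ℕ}

/-- `x · ω`, as a point of `ℂ`. -/
noncomputable def phase (ω : Fin d → ℝ) : (Fin d → ℤ) →+ ℂ :=
  AddMonoidHom.mk' (fun x => ((∑ j, (x j : ℝ) * ω j : ℝ) : ℂ)) fun x y => by
    simp only [Pi.add_apply, Int.cast_add, add_mul, Finset.sum_add_distrib, Complex.ofReal_add]

def l1Norm (x : Fin d → ℤ) : ℕ := ∑ j, (x j).natAbs

@[simp]
lemma l1Norm_zero : l1Norm (0 : Fin d → ℤ) = 0 := by
  simp [l1Norm]

@[simp]
lemma l1Norm_neg (x : Fin d → ℤ) : l1Norm (-x) = l1Norm x := by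
  simp [l1Norm]

lemma l1Norm_add_le (x y : Fin d → ℤ) : l1Norm (x + y) ≤ l1Norm x + l1Norm y := by
  simp only [l1Norm, ← Finset.sum_add_distrib]
  exact Finset.sum_le_sum fun j _ => Int.natAbs_add_le (x j) (y j)

variable (ω : Fin d → ℝ) (θ : Fin m → ℂ) (L : ℕ) (δ : ℝ)

/-- `‖θ^{(i)} + x·ω − θ^{(i′)}‖_𝕋`. -/
noncomputable def shiftDist (i : Fin m) (x : Fin d → ℤ) (i' : Fin m) : ℝ :=
  torusNorm (θ i + phase ω x - θ i')

/-- The set `Ω^{(i)}`. -/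
def resonantSet (i : Fin m) : Set (Fin d → ℤ) :=
  {x | l1Norm x ≤ L ∧ ∃ i', shiftDist ω θ i x i' ≤ δ}

def Resonant (i i' : Fin m) : Prop :=
  ∃ x : Fin d → ℤ, l1Norm x ≤ L ∧ shiftDist ω θ i x i' ≤ δ

variable {ω θ L δ}

lemma resonant_refl (hδ : 0 ≤ δ) (i : Fin m) : Resonant ω θ L δ i i :=
  ⟨0, by simp, by simpa [shiftDist] using hδ⟩

lemma resonant_symm {i i' : Fin m} : Resonant ω θ L δ i i' → Resonant ω θ L δ i' i := by
  rintro ⟨x, hxL, hx⟩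
  refine ⟨-x, by simpa using hxL, ?_⟩
  have hneg : θ i' + phase ω (-x) - θ i = -(θ i + phase ω x - θ i') := by
    rw [map_neg]; abel
  rwa [shiftDist, hneg, torusNorm_neg]

lemma shiftDist_add_le (x y : Fin d → ℤ) (i i' i'' : Fin m) :
    shiftDist ω θ i (x + y) i'' ≤ shiftDist ω θ i x i' + shiftDist ω θ i' y i'' := by
  unfold shiftDist
  convert torusNorm_add_le _ _ using 2
  rw [map_add]; abel

variable {α G : ℝ}

/-- The separation property of Proposition 2.3; `ha` and `hb` are the paper's (a) and (b). -/
lemma resonant_of_shiftDist_le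
    (ha : ∀ i x, l1Norm x ≤ L → (∃ i', shiftDist ω θ i x i' ≤ δ) →
      ∀ i'', ¬ shiftDist ω θ i x i'' ≤ δ → G < shiftDist ω θ i x i'')
    (hb : ∀ i x, (l1Norm x : ℝ) ≤ (L : ℝ) ^ α → x ∉ resonantSet ω θ L δ i →
      ∀ i', G < shiftDist ω θ i x i')
    {i i'' : Fin m} {z : Fin d → ℤ} (hzL : (l1Norm z : ℝ) ≤ (L : ℝ) ^ α)
    (hz : shiftDist ω θ i z i'' ≤ G) :
    Resonant ω θ L δ i i'' := by
  by_cases hΩ : z ∈ resonantSet ω θ L δ i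
  · obtain ⟨hzL', hres⟩ := hΩ
    exact ⟨z, hzL', not_lt.mp fun hδ => (ha i z hzL' hres i'' hδ.not_ge).not_ge hz⟩
  · exact absurd hz (hb i z hzL hΩ i'').not_ge

lemma resonant_trans (hG : 2 * δ < G) (h2L : ((2 * L : ℕ) : ℝ) ≤ (L : ℝ) ^ α)
    (ha : ∀ i x, l1Norm x ≤ L → (∃ i', shiftDist ω θ i x i' ≤ δ) →
      ∀ i'', ¬ shiftDist ω θ i x i'' ≤ δ → G < shiftDist ω θ i x i'')
    (hb : ∀ i x, (l1Norm x : ℝ) ≤ (L : ℝ) ^ α → x ∉ resonantSet ω θ L δ i →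
      ∀ i', G < shiftDist ω θ i x i')
    {i i' i'' : Fin m} :
    Resonant ω θ L δ i i' → Resonant ω θ L δ i' i'' → Resonant ω θ L δ i i'' := by
  rintro ⟨x, hxL, hx⟩ ⟨y, hyL, hy⟩
  have hxy_mem : (l1Norm (x + y) : ℝ) ≤ (L : ℝ) ^ α :=
    le_trans (by exact_mod_cast (l1Norm_add_le x y).trans (by omega)) h2L
  have hxy : shiftDist ω θ i (x + y) i'' ≤ G := by
    linarith [shiftDist_add_le (ω := ω) (θ := θ) x y i i' i'']
  exact resonant_of_shiftDist_le ha hb hxy_mem hxy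

end Resonance

open Resonance in
theorem resonance_equivalence_general (d m : ℕ) (ω : Fin d → ℝ) (θ : Fin m → ℂ)
    (L : ℕ) (α δb G : ℝ) (hδ : 0 < δb) (hG : 2 * δb < G)
    (h2L : ((2 * L : ℕ) : ℝ) ≤ (L : ℝ) ^ α)
    (ha : ∀ (i : Fin m) (x : Fin d → ℤ), (∑ j, (x j).natAbs) ≤ L →
      (∃ i', torusNorm (θ i + ((∑ j, (x j : ℝ) * ω j : ℝ) : ℂ) - θ i') ≤ δb) →
      ∀ i'' : Fin m,
        ¬ torusNorm (θ i + ((∑ j, (x j : ℝ) * ω j : ℝ) : ℂ) - θ i'') ≤ δb →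
        G < torusNorm (θ i + ((∑ j, (x j : ℝ) * ω j : ℝ) : ℂ) - θ i''))
    (hb : ∀ (i : Fin m) (x : Fin d → ℤ),
      ((∑ j, (x j).natAbs : ℕ) : ℝ) ≤ (L : ℝ) ^ α →
      ¬ ((∑ j, (x j).natAbs) ≤ L ∧
        ∃ i', torusNorm (θ i + ((∑ j, (x j : ℝ) * ω j : ℝ) : ℂ) - θ i') ≤ δb) →
      ∀ i' : Fin m,
        G < torusNorm (θ i + ((∑ j, (x j : ℝ) * ω j : ℝ) : ℂ) - θ i')) :
    Equivalence (fun i i' : Fin m => ∃ x : Fin d → ℤ,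
      (∑ j, (x j).natAbs) ≤ L ∧
      torusNorm (θ i + ((∑ j, (x j : ℝ) * ω j : ℝ) : ℂ) - θ i') ≤ δb) := by
  exact ⟨resonant_refl hδ.le, resonant_symm, resonant_trans hG h2L ha hb⟩

/-- The near-resonance relation `θ^{(i)} ∼ θ^{(i′)} :⇔ ∃ x ∈ Q_L,
`‖θ^{(i)} + x·ω − θ^{(i′)}‖_𝕋 ≤ δ̄` is an equivalence relation, provided:
(a) for every `x ∈ Q_L` and every `i″` failing the `δ̄`-bound one has separation `> G`
with `G > 2δ̄`; and (b) for `x ∈ Q_{L^α}` outside the resonant set `Ω^{(i)}`, the minimal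
shifted distance exceeds `G`. -/
theorem resonance_equivalence (d m : ℕ) (ω : Fin d → ℝ) (θ : Fin m → ℂ)
    (L : ℕ) (α δb G : ℝ) (hδ : 0 < δb) (hG : 2 * δb < G) (hα : 1 < α)
    (h2L : ((2 * L : ℕ) : ℝ) ≤ (L : ℝ) ^ α)
    (ha : ∀ (i : Fin m) (x : Fin d → ℤ), (∑ j, (x j).natAbs) ≤ L →
      (∃ i', torusNorm (θ i + ((∑ j, (x j : ℝ) * ω j : ℝ) : ℂ) - θ i') ≤ δb) →
      ∀ i'' : Fin m,
        ¬ torusNorm (θ i + ((∑ j, (x j : ℝ) * ω j : ℝ) : ℂ) - θ i'') ≤ δb →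
        G < torusNorm (θ i + ((∑ j, (x j : ℝ) * ω j : ℝ) : ℂ) - θ i''))
    (hb : ∀ (i : Fin m) (x : Fin d → ℤ),
      ((∑ j, (x j).natAbs : ℕ) : ℝ) ≤ (L : ℝ) ^ α →
      ¬ ((∑ j, (x j).natAbs) ≤ L ∧
        ∃ i', torusNorm (θ i + ((∑ j, (x j : ℝ) * ω j : ℝ) : ℂ) - θ i') ≤ δb) →
      ∀ i' : Fin m,
        G < torusNorm (θ i + ((∑ j, (x j : ℝ) * ω j : ℝ) : ℂ) - θ i')) :
    Equivalence (fun i i' : Fin m => ∃ x : Fin d → ℤ,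
      (∑ j, (x j).natAbs) ≤ L ∧
      torusNorm (θ i + ((∑ j, (x j : ℝ) * ω j : ℝ) : ℂ) - θ i') ≤ δb) :=
  resonance_equivalence_general d m ω θ L α δb G hδ hG h2L ha hb
end
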